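/- arXiv:1808.05430 — 8 statements merged into one kernel-verified Lean document; each statement's English description precedes it below -/
import Mathlib

section
/- For every n ≥ 1, the number of permutations of {1,...,n} avoiding both 312 and 123 equals 1 + n(n-1)/2. -/
abbrev Avoids312 {n : ℕ} (σ : Equiv.Perm (Fin n)) : Prop :=
  ¬ ∃ i j k : Fin n, i < j ∧ j < k ∧ σ j < σ k ∧ σ k < σ i

abbrev Avoids21 {n : ℕ} (σ : Equiv.Perm (Fin n)) : Prop :=
  ¬ ∃ i j : Fin n, i < j ∧ σ j < σ i

abbrev Avoids123 {n : ℕ} (σ : Equiv.Perm (Fin n)) : Prop :=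
  ¬ ∃ i j k : Fin n, i < j ∧ j < k ∧ σ i < σ j ∧ σ j < σ k

abbrev Avoids132 {n : ℕ} (σ : Equiv.Perm (Fin n)) : Prop :=
  ¬ ∃ i j k : Fin n, i < j ∧ j < k ∧ σ i < σ k ∧ σ k < σ j

abbrev Avoids213 {n : ℕ} (σ : Equiv.Perm (Fin n)) : Prop :=
  ¬ ∃ i j k : Fin n, i < j ∧ j < k ∧ σ j < σ i ∧ σ i < σ k

abbrev Avoids231 {n : ℕ} (σ : Equiv.Perm (Fin n)) : Prop :=
  ¬ ∃ i j k : Fin n, i < j ∧ j < k ∧ σ k < σ i ∧ σ i < σ j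

abbrev Avoids321 {n : ℕ} (σ : Equiv.Perm (Fin n)) : Prop :=
  ¬ ∃ i j k : Fin n, i < j ∧ j < k ∧ σ k < σ j ∧ σ j < σ i

abbrev Avoids1234 {n : ℕ} (σ : Equiv.Perm (Fin n)) : Prop :=
  ¬ ∃ i j k l : Fin n, i < j ∧ j < k ∧ k < l ∧ σ i < σ j ∧ σ j < σ k ∧ σ k < σ l

abbrev Avoids1243 {n : ℕ} (σ : Equiv.Perm (Fin n)) : Prop :=
  ¬ ∃ i j k l : Fin n, i < j ∧ j < k ∧ k < l ∧ σ i < σ j ∧ σ j < σ l ∧ σ l < σ k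

abbrev AvoidsIncr {n : ℕ} (m : ℕ) (σ : Equiv.Perm (Fin n)) : Prop :=
  ¬ ∃ f : Fin m → Fin n,
      (∀ i j : Fin m, i < j → f i < f j) ∧ (∀ i j : Fin m, i < j → σ (f i) < σ (f j))

/-- Length of the longest increasing subsequence of a permutation of `{1,…,n}`. -/
def lis {n : ℕ} (σ : Equiv.Perm (Fin n)) : ℕ :=
  Nat.findGreatest (fun k => ∃ f : Fin k → Fin n,
    (∀ i j : Fin k, i < j → f i < f j) ∧ (∀ i j : Fin k, i < j → σ (f i) < σ (f j))) n

/-!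
Let `P` be the position of the maximum of `σ`. Avoiding `123` makes `σ` decrease before `P`,
avoiding `312` makes it decrease from `P` on, and avoiding `312` also puts every entry after `P`
above or below the whole first run. Since `σ x` is the number of entries smaller than `σ x`, these
facts determine `σ`: it is the reversal of the permutation exchanging two adjacent initial blocks
`[0, p)` and `[p, m)`. Conversely every such permutation avoids both patterns, and they are the
reversal together with one permutation for each pair `1 ≤ p < m ≤ n`, hence `1 + n.choose 2`.
-/

open Finset Equiv

/-- The reversal of the permutation of `[0, n)` exchanging the adjacent blocks `[0, p)` and
`[p, m)`, i.e. `x ↦ n - 1 - τ x` with `τ x = x + (m - p)` on `[0, p)`, `x - p` on `[p, m)`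
and `x` on `[m, n)`. -/
def revBlockSwap (n p m x : ℕ) : ℕ :=
  if x < p then n - 1 + p - m - x else if x < m then n - 1 + p - x else n - 1 - x

section revBlockSwap

variable {n p m : ℕ}

lemma revBlockSwap_lt (hpm : p ≤ m) {x : ℕ} (hx : x < n) : revBlockSwap n p m x < n := by
  unfold revBlockSwap; split_ifs <;> omega

lemma revBlockSwap_injOn (hmn : m ≤ n) {x y : ℕ} (hx : x < n) (hy : y < n)
    (h : revBlockSwap n p m x = revBlockSwap n p m y) : x = y := by
  unfold revBlockSwap at h; split_ifs at h <;> omega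

noncomputable def revBlockSwapPerm (h : p ≤ m ∧ m ≤ n) : Perm (Fin n) :=
  Equiv.ofBijective (fun x ↦ ⟨revBlockSwap n p m x, revBlockSwap_lt h.1 x.isLt⟩) <|
    Finite.injective_iff_bijective.mp fun x y hxy ↦
      Fin.ext (revBlockSwap_injOn h.2 x.isLt y.isLt (congrArg Fin.val hxy))

lemma revBlockSwapPerm_apply (h : p ≤ m ∧ m ≤ n) (x : Fin n) :
    (revBlockSwapPerm h x : ℕ) = revBlockSwap n p m x := rfl

lemma avoids312_revBlockSwapPerm (h : p ≤ m ∧ m ≤ n) : Avoids312 (revBlockSwapPerm h) := by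
  rintro ⟨i, j, k, hij, hjk, h₁, h₂⟩
  simp only [Fin.lt_def, revBlockSwapPerm_apply, revBlockSwap] at *
  split_ifs at h₁ h₂ <;> omega

lemma avoids123_revBlockSwapPerm (h : p ≤ m ∧ m ≤ n) : Avoids123 (revBlockSwapPerm h) := by
  rintro ⟨i, j, k, hij, hjk, h₁, h₂⟩
  simp only [Fin.lt_def, revBlockSwapPerm_apply, revBlockSwap] at *
  split_ifs at h₁ h₂ <;> omega

end revBlockSwap

lemma Equiv.Perm.val_apply_eq_card_lt {n : ℕ} (σ : Perm (Fin n)) (x : Fin n) :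
    (σ x : ℕ) = #{y | σ y < σ x} := by
  rw [← Fin.card_Iio (σ x)]
  exact (card_equiv σ (by simp)).symm

lemma val_apply_eq_card_add_card {n : ℕ} (σ : Perm (Fin n)) (P x : Fin n) :
    (σ x : ℕ) = #{y | y < P ∧ σ y < σ x} + #{y | ¬ y < P ∧ σ y < σ x} := by
  rw [σ.val_apply_eq_card_lt, ← card_filter_add_card_filter_not (fun y ↦ y < P), filter_filter,
    filter_filter]
  simp only [and_comm]

section Avoiders

variable {n : ℕ} {σ : Perm (Fin n)} {P : Fin n}

lemma strictAntiOn_Iio_of_avoids123 (h123 : Avoids123 σ) (hP : ∀ y, σ y ≤ σ P) :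
    StrictAntiOn σ (Set.Iio P) := by
  intro i _ j (hjP : j < P) hij
  refine lt_of_le_of_ne (not_lt.mp fun hlt ↦ h123 ⟨i, j, P, hij, hjP, hlt, ?_⟩)
    (σ.injective.ne hij.ne')
  exact lt_of_le_of_ne (hP j) (σ.injective.ne hjP.ne)

lemma strictAntiOn_Ici_of_avoids312 (h312 : Avoids312 σ) (hP : ∀ y, σ y ≤ σ P) :
    StrictAntiOn σ (Set.Ici P) := by
  intro j (hPj : P ≤ j) k _ hjk
  have hkP : σ k < σ P := lt_of_le_of_ne (hP k) (σ.injective.ne (hPj.trans_lt hjk).ne')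
  rcases hPj.eq_or_lt with rfl | hPj
  · exact hkP
  · exact lt_of_le_of_ne (not_lt.mp fun hlt ↦ h312 ⟨P, j, k, hPj, hjk, hlt, hkP⟩)
      (σ.injective.ne hjk.ne')

lemma forall_lt_or_forall_gt_of_avoids (h312 : Avoids312 σ) (h123 : Avoids123 σ)
    (hP : ∀ y, σ y ≤ σ P) {x : Fin n} (hx : P ≤ x) :
    (∀ y < P, σ y < σ x) ∨ (∀ y < P, σ x < σ y) := by
  by_contra! ⟨⟨i, hiP, hi⟩, ⟨j, hjP, hj⟩⟩
  have hi : σ x < σ i := lt_of_le_of_ne hi (σ.injective.ne (hiP.trans_le hx).ne')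
  have hj : σ j < σ x := lt_of_le_of_ne hj (σ.injective.ne (hjP.trans_le hx).ne)
  have hij : i < j := (strictAntiOn_Iio_of_avoids123 h123 hP).lt_iff_gt hjP hiP |>.mp
    (hj.trans hi)
  exact h312 ⟨i, j, x, hij, hjP.trans_le hx, hj, hi⟩

lemma val_apply_add_eq_of_lt_max (h312 : Avoids312 σ) (h123 : Avoids123 σ)
    (hP : ∀ y, σ y ≤ σ P) {x x' : Fin n} (hx : x < P) (hx' : x' < P) :
    (σ x : ℕ) + x = σ x' + x' := by
  have hanti := strictAntiOn_Iio_of_avoids123 h123 hP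
  have hrun : ∀ z < P, #{y | y < P ∧ σ y < σ z} = P - z - 1 := fun z hz ↦ by
    rw [← Fin.card_Ioo]
    congr 1; ext y
    simp only [mem_filter, mem_univ, true_and, mem_Ioo]
    exact ⟨fun ⟨hyP, hy⟩ ↦ ⟨(hanti.lt_iff_gt hyP hz).mp hy, hyP⟩,
      fun ⟨hzy, hyP⟩ ↦ ⟨hyP, (hanti.lt_iff_gt hyP hz).mpr hzy⟩⟩
  have hrest : #{y | ¬ y < P ∧ σ y < σ x} = #{y | ¬ y < P ∧ σ y < σ x'} := by
    congr 1; ext y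
    simp only [mem_filter, mem_univ, true_and, and_congr_right_iff, not_lt]
    intro hPy
    rcases forall_lt_or_forall_gt_of_avoids h312 h123 hP hPy with h | h
    · exact iff_of_false (h x hx).not_gt (h x' hx').not_gt
    · exact iff_of_true (h x hx) (h x' hx')
  rw [val_apply_eq_card_add_card σ P x, val_apply_eq_card_add_card σ P x', hrun x hx,
    hrun x' hx', hrest]
  omega

lemma val_apply_eq_of_max_le (h312 : Avoids312 σ) (hP : ∀ y, σ y ≤ σ P) {x : Fin n}
    (hx : P ≤ x) : (σ x : ℕ) = #{y | y < P ∧ σ y < σ x} + (n - 1 - x) := by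
  have hanti := strictAntiOn_Ici_of_avoids312 h312 hP
  rw [val_apply_eq_card_add_card σ P x, ← Fin.card_Ioi]
  congr 2; ext y
  simp only [mem_filter, mem_univ, true_and, mem_Ioi, not_lt]
  exact ⟨fun ⟨hPy, hy⟩ ↦ (hanti.lt_iff_gt hPy hx).mp hy,
    fun hxy ↦ ⟨hx.trans hxy.le, (hanti.lt_iff_gt (hx.trans hxy.le) hx).mpr hxy⟩⟩

end Avoiders

theorem val_apply_eq_revBlockSwap {n : ℕ} [NeZero n] {σ : Perm (Fin n)} {P : Fin n}
    (h312 : Avoids312 σ) (h123 : Avoids123 σ) (hP : ∀ y, σ y ≤ σ P) (x : Fin n) :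
    (σ x : ℕ) = revBlockSwap n P (P + (n - 1 - σ 0)) x := by
  have hrun : ∀ z < P, (σ z : ℕ) + z = σ 0 := fun z hz ↦ by
    simpa using val_apply_add_eq_of_lt_max h312 h123 hP hz ((Fin.zero_le z).trans_lt hz)
  have h0 := (σ 0).isLt
  have hxn := x.isLt
  unfold revBlockSwap
  rcases lt_or_ge x P with hx | hx
  · have := hrun x hx
    rw [if_pos (Fin.lt_def.mp hx)]
    omega
  have hPx : (P : ℕ) ≤ x := hx
  have hval := val_apply_eq_of_max_le h312 hP hx
  rcases forall_lt_or_forall_gt_of_avoids h312 h123 hP hx with hbelow | habove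
  · have hcard : #{y | y < P ∧ σ y < σ x} = P := by
      rw [← Fin.card_Iio P]
      congr 1; ext y
      simpa using hbelow y
    have hfirst : 0 < (P : ℕ) → (σ 0 : ℕ) < σ x := fun hP0 ↦
      hbelow 0 (Fin.lt_def.mpr (by rwa [Fin.val_zero]))
    split_ifs <;> omega
  · have hcard : #{y | y < P ∧ σ y < σ x} = 0 := by
      rw [card_eq_zero, filter_eq_empty_iff]
      exact fun y _ ⟨hyP, hy⟩ ↦ (habove y hyP).not_gt hy
    have hlast : 0 < (P : ℕ) → (σ x : ℕ) + P ≤ σ 0 := fun hP0 ↦ by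
      have hz : (⟨P - 1, by omega⟩ : Fin n) < P := Fin.lt_def.mpr (by simp only; omega)
      have h₁ := Fin.lt_def.mp (habove _ hz)
      have h₂ := hrun _ hz
      simp only at h₂
      omega
    split_ifs <;> omega

/-- The block parameters `(p, m)` of the permutations `revBlockSwapPerm`, where `(0, 0)` stands
for the reversal (the value of every degenerate pair `p = 0` or `p = m`). -/
def admissibleBlocks (n : ℕ) : Finset (ℕ × ℕ) :=
  insert (0, 0) {q ∈ Icc 1 n ×ˢ Icc 1 n | q.1 < q.2}

lemma card_admissibleBlocks (n : ℕ) : #(admissibleBlocks n) = 1 + n.choose 2 := by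
  rw [admissibleBlocks, card_insert_of_notMem (by simp), card_product_filter_lt, Nat.card_Icc,
    Nat.add_sub_cancel, add_comm]

lemma le_and_le_of_mem_admissibleBlocks {n : ℕ} {q : ℕ × ℕ} (hq : q ∈ admissibleBlocks n) :
    q.1 ≤ q.2 ∧ q.2 ≤ n := by
  simp only [admissibleBlocks, mem_insert, mem_filter, mem_product, mem_Icc] at hq
  rcases hq with rfl | hq <;> omega

def blocksOf {n : ℕ} [NeZero n] (σ : Perm (Fin n)) : ℕ × ℕ :=
  (σ.symm ⊤, σ.symm ⊤ + (n - 1 - σ 0))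

section blocksOf

variable {n : ℕ} [NeZero n]

lemma blocksOf_mem_admissibleBlocks {σ : Perm (Fin n)} (h312 : Avoids312 σ)
    (h123 : Avoids123 σ) : blocksOf σ ∈ admissibleBlocks n := by
  have htop : ((⊤ : Fin n) : ℕ) = n - 1 := Fin.val_top n
  have h0 := (σ 0).isLt
  simp only [blocksOf, admissibleBlocks, mem_insert, mem_filter, mem_product, mem_Icc,
    Prod.ext_iff]
  generalize hPdef : σ.symm ⊤ = P
  have hP : σ P = ⊤ := by rw [← hPdef, σ.apply_symm_apply]
  rcases Nat.eq_zero_or_pos (P : ℕ) with hP0 | hP0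
  · left
    obtain rfl : P = 0 := Fin.ext (hP0.trans (Fin.val_zero n).symm)
    simp [hP, htop]
  · right
    have hP1 : (⟨P - 1, by omega⟩ : Fin n) < P := Fin.lt_def.mpr (by simp only; omega)
    have hrun := val_apply_add_eq_of_lt_max h312 h123 (fun y ↦ hP ▸ le_top) hP1
      (Fin.lt_def.mpr (by rwa [Fin.val_zero]))
    have h0lt : (σ 0 : ℕ) < n - 1 := by
      refine htop ▸ Fin.lt_def.mp (lt_top_iff_ne_top.mpr ?_)
      rw [← hP]
      exact σ.injective.ne (Fin.ne_of_val_ne (by rw [Fin.val_zero]; omega))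
    simp only [Fin.val_zero] at hrun
    have := P.isLt
    omega

lemma blocksOf_revBlockSwapPerm {q : ℕ × ℕ} (hq : q ∈ admissibleBlocks n) :
    blocksOf (revBlockSwapPerm (le_and_le_of_mem_admissibleBlocks hq)) = q := by
  obtain ⟨p, m⟩ := q
  have hcases : p = 0 ∧ m = 0 ∨ 1 ≤ p ∧ p < m ∧ m ≤ n := by
    simp only [admissibleBlocks, mem_insert, mem_filter, mem_product, mem_Icc, Prod.ext_iff] at hq
    omega
  have hpn : p < n := by have := NeZero.pos n; omega
  have hmax : (revBlockSwapPerm (le_and_le_of_mem_admissibleBlocks hq)).symm ⊤ = ⟨p, hpn⟩ := by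
    rw [Equiv.symm_apply_eq, Fin.ext_iff, revBlockSwapPerm_apply, Fin.val_top, revBlockSwap]
    dsimp only
    split_ifs <;> omega
  rw [blocksOf, hmax, revBlockSwapPerm_apply, Fin.val_zero, revBlockSwap, Prod.ext_iff]
  dsimp only
  split_ifs <;> omega

end blocksOf

theorem card_filter_avoids312_avoids123 (n : ℕ) [NeZero n] :
    #{σ : Perm (Fin n) | Avoids312 σ ∧ Avoids123 σ} = 1 + n.choose 2 := by
  rw [← card_admissibleBlocks]
  refine card_bij' (fun σ _ ↦ blocksOf σ)
    (fun q hq ↦ revBlockSwapPerm (le_and_le_of_mem_admissibleBlocks hq)) ?_ ?_ ?_ ?_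
  · intro σ hσ
    rw [mem_filter] at hσ
    exact blocksOf_mem_admissibleBlocks hσ.2.1 hσ.2.2
  · intro q hq
    exact mem_filter.mpr ⟨mem_univ _, avoids312_revBlockSwapPerm _, avoids123_revBlockSwapPerm _⟩
  · intro σ hσ
    rw [mem_filter] at hσ
    have hmax : ∀ y, σ y ≤ σ (σ.symm ⊤) := fun y ↦ by
      rw [σ.apply_symm_apply]
      exact le_top
    ext x
    exact (val_apply_eq_revBlockSwap hσ.2.1 hσ.2.2 hmax x).symm
  · intro q hq
    exact blocksOf_revBlockSwapPerm hq

/-- `|S_n(312,123)| = 1 + n(n-1)/2` for `n ≥ 1`. -/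
theorem stmt_2 (n : ℕ) (hn : 1 ≤ n) :
    (Finset.univ.filter (fun σ : Equiv.Perm (Fin n) => Avoids312 σ ∧ Avoids123 σ)).card
      = 1 + n * (n - 1) / 2 := by
  have : NeZero n := ⟨by omega⟩
  rw [card_filter_avoids312_avoids123, Nat.choose_two_right]
end

section
/- For every n ≥ 1, the sum over all permutations σ of {1,...,n} avoiding both 312 and 123 of L(σ) equals 2(n² - n + 1), where L(σ) is the length of the longest increasing subsequence of σ. Equivalently, the expected value of L over the uniform distribution on S_n(312,123) is 2(n²-n+1)/(n²-n+2). -/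
/-! A permutation avoiding 312 and 123 decreases both before and after the position `a` of its
maximum. If `a = 0` it is the reversal. Otherwise 312-avoidance makes every entry after `a` lie
above all entries before `a` or below all of them, and the permutation is determined by `a` and by
the last position `y` holding an entry above them: it is one of the `C(n, 2)` permutations
`blockPerm x y` with `x < y`. The reversal has `L = 1`; every other member has an ascent but no
increasing triple, so `L = 2`. -/

open Equiv Finset

theorem Equiv.Perm.eq_of_lt_iff_lt {α : Type*} [LinearOrder α] [WellFoundedLT α]
    {σ τ : Perm α} (h : ∀ i j, σ i < σ j ↔ τ i < τ j) : σ = τ := by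
  have hmono : StrictMono (σ ∘ τ.symm) := fun x y hxy => by simpa [h] using hxy
  let e : α ≃o α := hmono.orderIsoOfSurjective _ (σ.surjective.comp τ.symm.surjective)
  ext x
  simpa [e] using congr($(Subsingleton.elim e (OrderIso.refl α)) (τ x))

theorem Fin.eq_revPerm_of_strictAnti {n : ℕ} {σ : Perm (Fin n)} (h : StrictAnti σ) :
    σ = Fin.revPerm :=
  Perm.eq_of_lt_iff_lt fun i j => by
    rw [h.lt_iff_gt, Fin.revPerm_apply, Fin.revPerm_apply, Fin.rev_lt_rev]

section LongestIncreasing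

variable {n : ℕ} (σ : Perm (Fin n))

lemma lis_spec :
    ∃ f : Fin (lis σ) → Fin n, StrictMono f ∧ StrictMono (σ ∘ f) :=
  Nat.findGreatest_spec (P := fun k => ∃ f : Fin k → Fin n, StrictMono f ∧ StrictMono (σ ∘ f))
    (Nat.zero_le n) ⟨Fin.elim0, fun i => i.elim0, fun i => i.elim0⟩

lemma le_lis {k : ℕ} {f : Fin k → Fin n} (hf : StrictMono f) (hσf : StrictMono (σ ∘ f)) :
    k ≤ lis σ :=
  Nat.le_findGreatest (by simpa using Fintype.card_le_of_injective f hf.injective) ⟨f, hf, hσf⟩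

lemma lis_le_two (h : Avoids123 σ) : lis σ ≤ 2 := by
  by_contra! h3
  obtain ⟨f, hf, hσf⟩ := lis_spec σ
  have h01 : (⟨0, by omega⟩ : Fin (lis σ)) < ⟨1, by omega⟩ := by simp [Fin.lt_def]
  have h12 : (⟨1, by omega⟩ : Fin (lis σ)) < ⟨2, by omega⟩ := by simp [Fin.lt_def]
  exact h ⟨_, _, _, hf h01, hf h12, hσf h01, hσf h12⟩

lemma lis_le_one_of_strictAnti (h : StrictAnti σ) : lis σ ≤ 1 := by
  by_contra! h2
  obtain ⟨f, hf, hσf⟩ := lis_spec σ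
  have h01 : (⟨0, by omega⟩ : Fin (lis σ)) < ⟨1, by omega⟩ := by simp [Fin.lt_def]
  exact (h (hf h01)).not_gt (hσf h01)

lemma two_le_lis {i j : Fin n} (hij : i < j) (hσ : σ i < σ j) : 2 ≤ lis σ :=
  le_lis σ (f := ![i, j]) (Fin.strictMono_iff_lt_succ.2 (by simpa using hij))
    (Fin.strictMono_iff_lt_succ.2 (by simpa using hσ))

lemma lis_revPerm (hn : 0 < n) : lis (Fin.revPerm : Perm (Fin n)) = 1 :=
  le_antisymm (lis_le_one_of_strictAnti _ fun _ _ => Fin.rev_lt_rev.2)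
    (le_lis _ (f := fun _ : Fin 1 => ⟨0, hn⟩) (Subsingleton.strictMono _)
      (Subsingleton.strictMono _))

lemma lis_eq_two (h : Avoids123 σ) (hne : σ ≠ Fin.revPerm) : lis σ = 2 := by
  obtain ⟨i, j, hij, hσ⟩ : ∃ i j, i < j ∧ σ i < σ j := by
    by_contra! hanti
    exact hne (Fin.eq_revPerm_of_strictAnti fun i j hij =>
      (hanti i j hij).lt_of_ne (σ.injective.ne hij.ne'))
  exact le_antisymm (lis_le_two σ h) (two_le_lis σ hij hσ)

end LongestIncreasing

section Blocks

variable {n : ℕ}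

/-- In one-line notation `blockPerm x y` is, e.g., `2 1 4 3 0` for `n = 5`, `x = 1`, `y = 3`:
three decreasing runs on the positions `[0, x]`, `(x, y]`, `(y, n)`, the middle run holding the
largest values and the last run the smallest. For `y ≤ x` it is `Fin.revPerm`. -/
noncomputable def blockPerm (x y : Fin n) : Perm (Fin n) :=
  Equiv.ofBijective
    (fun i => ⟨if (i : ℕ) ≤ x then n - 1 - ((y : ℕ) - x) - i else if (i : ℕ) ≤ y then n + x - i
      else n - 1 - i,
      by split_ifs <;> omega⟩)
    (Finite.injective_iff_bijective.mp fun i j hij => by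
      simp only [Fin.mk.injEq] at hij
      split_ifs at hij <;> omega)

lemma blockPerm_apply_val (x y i : Fin n) : (blockPerm x y i : ℕ) =
    if (i : ℕ) ≤ x then n - 1 - ((y : ℕ) - x) - i else if (i : ℕ) ≤ y then n + x - i
    else n - 1 - i :=
  rfl

lemma avoids312_blockPerm (x y : Fin n) : Avoids312 (blockPerm x y) := by
  rintro ⟨i, j, k, hij, hjk, h₁, h₂⟩
  simp only [Fin.lt_def, blockPerm_apply_val] at h₁ h₂
  split_ifs at h₁ h₂ <;> omega

lemma avoids123_blockPerm (x y : Fin n) : Avoids123 (blockPerm x y) := by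
  rintro ⟨i, j, k, hij, hjk, h₁, h₂⟩
  simp only [Fin.lt_def, blockPerm_apply_val] at h₁ h₂
  split_ifs at h₁ h₂ <;> omega

lemma avoids312_revPerm : Avoids312 (Fin.revPerm : Perm (Fin n)) := by
  rintro ⟨i, j, k, hij, hjk, h₁, h₂⟩
  simp only [Fin.lt_def, Fin.revPerm_apply, Fin.val_rev] at h₁ h₂
  omega

lemma avoids123_revPerm : Avoids123 (Fin.revPerm : Perm (Fin n)) := by
  rintro ⟨i, j, k, hij, hjk, h₁, h₂⟩
  simp only [Fin.lt_def, Fin.revPerm_apply, Fin.val_rev] at h₁ h₂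
  omega

lemma blockPerm_ne_revPerm {x y : Fin n} (hxy : x < y) : blockPerm x y ≠ Fin.revPerm := by
  intro h
  have := congr(($h ⟨x + 1, by omega⟩ : ℕ))
  simp only [blockPerm_apply_val, Fin.revPerm_apply, Fin.val_rev] at this
  split_ifs at this <;> omega

lemma injOn_blockPerm :
    Set.InjOn (fun p : Fin n × Fin n => blockPerm p.1 p.2) {p | p.1 < p.2} := by
  rintro ⟨x, y⟩ hxy ⟨x', y'⟩ hxy' h
  dsimp only [Set.mem_ofPred_eq] at hxy hxy' h
  have key := fun k (hk : k < n) => congr(($h ⟨k, hk⟩ : ℕ))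
  have hx : x = x' := by
    have h₁ := key (x + 1) (by omega)
    have h₂ := key (x' + 1) (by omega)
    simp only [blockPerm_apply_val] at h₁ h₂
    split_ifs at h₁ h₂ <;> omega
  subst hx
  have h₀ := key 0 (by omega)
  simp only [blockPerm_apply_val] at h₀
  exact congrArg (Prod.mk x) (Fin.ext (by split_ifs at h₀ <;> omega))

end Blocks

section Structure

variable {n : ℕ} {σ : Perm (Fin n)}

lemma strictAntiOn_Iio_of_avoids123_s4 (h : Avoids123 σ) {a : Fin n} (ha : ∀ i, σ i ≤ σ a) :
    StrictAntiOn σ (Set.Iio a) := by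
  intro i hi j hj hij
  by_contra! hle
  have hja : σ j < σ a := (ha j).lt_of_ne (σ.injective.ne (ne_of_lt hj))
  exact h ⟨i, j, a, hij, hj, hle.lt_of_ne (σ.injective.ne hij.ne), hja⟩

lemma strictAntiOn_Ici_of_avoids312_s4 (h : Avoids312 σ) {a : Fin n} (ha : ∀ i, σ i ≤ σ a) :
    StrictAntiOn σ (Set.Ici a) := by
  intro i hi j hj hij
  by_contra! hle
  have hlt : σ i < σ j := hle.lt_of_ne (σ.injective.ne hij.ne)
  have hja : σ j < σ a := (ha j).lt_of_ne (σ.injective.ne (ne_of_gt (lt_of_le_of_lt hi hij)))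
  rcases (Set.mem_Ici.mp hi).lt_or_eq with hai | rfl
  · exact h ⟨a, i, j, hai, hij, hlt, hja⟩
  · exact hja.not_gt hlt

lemma lt_apply_iff_of_avoids312 (h : Avoids312 σ) {i₀ i j : Fin n} (hi₀ : i₀ ≤ i) (hij : i < j)
    (hσi : σ i ≤ σ i₀) : σ i < σ j ↔ σ i₀ < σ j := by
  refine ⟨fun hlt => ?_, hσi.trans_lt⟩
  rcases hi₀.lt_or_eq with hi₀ | rfl
  · have hne : σ j ≠ σ i₀ := σ.injective.ne (ne_of_gt (hi₀.trans hij))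
    by_contra! hle
    exact h ⟨i₀, i, j, hi₀, hij, hlt, hle.lt_of_ne hne⟩
  · exact hlt

theorem eq_revPerm_or_eq_blockPerm (h312 : Avoids312 σ) (h123 : Avoids123 σ) :
    σ = Fin.revPerm ∨ ∃ x y : Fin n, x < y ∧ σ = blockPerm x y := by
  rcases n.eq_zero_or_pos with rfl | hn
  · exact Or.inl (Subsingleton.elim _ _)
  obtain ⟨a, hσa⟩ : ∃ a : Fin n, (σ a : ℕ) = n - 1 := ⟨σ.symm ⟨n - 1, by omega⟩, by simp⟩
  have ha : ∀ i, σ i ≤ σ a := fun i => by rw [Fin.le_def, hσa]; omega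
  have hlow := strictAntiOn_Iio_of_avoids123_s4 h123 ha
  have hhigh := strictAntiOn_Ici_of_avoids312_s4 h312 ha
  obtain ⟨z, hz⟩ : ∃ z : Fin n, (z : ℕ) = 0 := ⟨⟨0, hn⟩, rfl⟩
  by_cases ha0 : a = z
  · refine Or.inl (Fin.eq_revPerm_of_strictAnti fun i j hij => hhigh ?_ ?_ hij) <;>
      simp only [Set.mem_Ici] <;> omega
  right
  have hzσ : ∀ i < a, σ i ≤ σ z := fun i hi =>
    (eq_or_lt_of_le (show z ≤ i by omega)).elim (fun h => h ▸ le_rfl)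
      fun h => (hlow (show z < a by omega) hi h).le
  have hza : σ z < σ a := (ha z).lt_of_ne (σ.injective.ne (Ne.symm ha0))
  obtain ⟨y, hσy⟩ : ∃ y : Fin n, (σ y : ℕ) = σ z + 1 :=
    ⟨σ.symm ⟨σ z + 1, by omega⟩, by simp⟩
  have hay : a ≤ y := by
    by_contra! hya
    have := hzσ y hya
    omega
  have hcross : ∀ i j, i < a → a ≤ j → (σ i < σ j ↔ j ≤ y) := by
    intro i j hi hj
    rw [lt_apply_iff_of_avoids312 h312 (show z ≤ i by omega) (hi.trans_le hj) (hzσ i hi)]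
    constructor
    · intro hzj
      by_contra! hyj
      have := hhigh hay hj hyj
      omega
    · intro hjy
      rcases hjy.lt_or_eq with hjy | rfl
      · have := hhigh hj hay hjy
        omega
      · omega
  obtain ⟨x, hx⟩ : ∃ x : Fin n, (x : ℕ) + 1 = a := ⟨⟨a - 1, by omega⟩, by simp; omega⟩
  refine ⟨x, y, by omega, Perm.eq_of_lt_iff_lt fun i j => ?_⟩
  rw [Fin.lt_def (a := blockPerm _ _ i), blockPerm_apply_val, blockPerm_apply_val]
  rcases lt_or_ge i a with hi | hi <;> rcases lt_or_ge j a with hj | hj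
  · rw [hlow.lt_iff_gt hi hj]; split_ifs <;> omega
  · rw [hcross i j hi hj]; split_ifs <;> omega
  · rw [lt_iff_not_ge, (σ.injective.ne (ne_of_lt (hj.trans_le hi))).le_iff_lt, hcross j i hj hi]
    split_ifs <;> omega
  · rw [hhigh.lt_iff_gt hi hj]; split_ifs <;> omega

theorem avoids312_and_avoids123_iff : Avoids312 σ ∧ Avoids123 σ ↔
    σ = Fin.revPerm ∨ ∃ x y : Fin n, x < y ∧ σ = blockPerm x y := by
  refine ⟨fun h => eq_revPerm_or_eq_blockPerm h.1 h.2, ?_⟩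
  rintro (rfl | ⟨x, y, -, rfl⟩)
  exacts [⟨avoids312_revPerm, avoids123_revPerm⟩,
    ⟨avoids312_blockPerm x y, avoids123_blockPerm x y⟩]

end Structure

/-- the expected longest increasing subsequence length over the uniform
distribution on `S_n(312,123)` equals `2(n²-n+1)/(n²-n+2)`. -/
theorem stmt_4 (n : ℕ) (hn : 1 ≤ n) :
    (∑ σ ∈ Finset.univ.filter (fun σ : Equiv.Perm (Fin n) => Avoids312 σ ∧ Avoids123 σ),
        (lis σ : ℚ)) /
      ((Finset.univ.filter (fun σ : Equiv.Perm (Fin n) => Avoids312 σ ∧ Avoids123 σ)).card : ℚ)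
      = 2 * ((n : ℚ) ^ 2 - n + 1) / ((n : ℚ) ^ 2 - n + 2) := by
  set T := univ.filter fun p : Fin n × Fin n => p.1 < p.2
  have hS : univ.filter (fun σ : Perm (Fin n) => Avoids312 σ ∧ Avoids123 σ) =
      insert Fin.revPerm (T.image fun p => blockPerm p.1 p.2) := by
    ext σ
    rw [mem_filter, avoids312_and_avoids123_iff]
    simp [T, eq_comm]
  have hrev : Fin.revPerm ∉ T.image fun p => blockPerm p.1 p.2 := by
    simpa [T] using fun x y hxy => blockPerm_ne_revPerm hxy
  have hinj : Set.InjOn (fun p : Fin n × Fin n => blockPerm p.1 p.2) T := by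
    simpa [T] using injOn_blockPerm
  have hlis : ∀ p ∈ T, (lis (blockPerm p.1 p.2) : ℚ) = 2 := fun p hp => by
    rw [lis_eq_two _ (avoids123_blockPerm _ _) (blockPerm_ne_revPerm (by simpa [T] using hp))]
    norm_num
  have hT : (T.card : ℚ) = n * (n - 1) / 2 := by
    rw [Fintype.card_product_filter_lt, Fintype.card_fin, Nat.cast_choose_two]
  rw [hS, sum_insert hrev, sum_image hinj, sum_congr rfl hlis, card_insert_of_notMem hrev,
    card_image_of_injOn hinj, lis_revPerm hn, sum_const, nsmul_eq_mul]
  push_cast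
  rw [hT]
  field_simp
  ring
end

section
/- For every n ≥ 1, the sum over all permutations σ of {1,...,n} avoiding both 312 and 132 of L(σ) equals 2^{n-1}·(n+1)/2; equivalently the expected longest increasing subsequence length on S_n(312,132) equals (n+1)/2. -/
/-!
A permutation avoids 312 and 132 exactly when each entry is either a new maximum or a new
minimum of the entries before it. Such a permutation is determined by the set of positions
whose entry lies above the first entry, and every subset of `{2, …, n}` arises, which gives
`2^(n-1)` permutations. The first entry together with the entries above it form a longest
increasing subsequence, so `L(σ)` is one more than the size of that set, and the sizes of the
subsets of an `(n-1)`-set average `(n-1)/2`.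
-/

open Finset Function

section PrefixExtremal

variable {α β : Type*} [LinearOrder α] [LinearOrder β] {n : ℕ}

def IsPrefixExtremal (f : Fin n → α) : Prop :=
  ∀ q, (∀ p < q, f p < f q) ∨ (∀ p < q, f q < f p)

lemma IsPrefixExtremal.of_lt_iff_lt {f : Fin n → α} {g : Fin n → β}
    (hfg : ∀ p q, f p < f q ↔ g p < g q) (hg : IsPrefixExtremal g) : IsPrefixExtremal f := by
  simpa only [IsPrefixExtremal, hfg] using hg

lemma IsPrefixExtremal.lt_iff_zero_lt {f : Fin (n + 1) → α} (hf : IsPrefixExtremal f)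
    {p q : Fin (n + 1)} (hpq : p < q) : f p < f q ↔ f 0 < f q := by
  have h0q : 0 < q := (Fin.zero_le p).trans_lt hpq
  rcases hf q with h | h
  · exact iff_of_true (h p hpq) (h 0 h0q)
  · exact iff_of_false (h p hpq).asymm (h 0 h0q).asymm

lemma IsPrefixExtremal.lt_iff_lt {f : Fin (n + 1) → α} {g : Fin (n + 1) → β}
    (hf : IsPrefixExtremal f) (hg : IsPrefixExtremal g) (hf_inj : Injective f)
    (hg_inj : Injective g) (h0 : ∀ q, f 0 < f q ↔ g 0 < g q) (p q : Fin (n + 1)) :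
    f p < f q ↔ g p < g q := by
  rcases lt_trichotomy p q with hpq | rfl | hqp
  · rw [hf.lt_iff_zero_lt hpq, hg.lt_iff_zero_lt hpq, h0]
  · simp
  · rw [← not_iff_not, not_lt, not_lt, (hf_inj.ne hqp.ne).le_iff_lt,
      (hg_inj.ne hqp.ne).le_iff_lt, hf.lt_iff_zero_lt hqp, hg.lt_iff_zero_lt hqp, h0]

end PrefixExtremal

theorem isPrefixExtremal_iff_avoids312_and_avoids132 {n : ℕ} (σ : Equiv.Perm (Fin n)) :
    IsPrefixExtremal σ ↔ Avoids312 σ ∧ Avoids132 σ := by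
  refine ⟨fun h => ⟨?_, ?_⟩, fun h q => ?_⟩
  · rintro ⟨i, j, k, hij, hjk, hjk', hki⟩
    rcases h k with hk | hk
    · exact (hk i (hij.trans hjk)).asymm hki
    · exact (hk j hjk).asymm hjk'
  · rintro ⟨i, j, k, hij, hjk, hik, hkj⟩
    rcases h k with hk | hk
    · exact (hk j hjk).asymm hkj
    · exact (hk i (hij.trans hjk)).asymm hik
  · by_contra! hq
    obtain ⟨⟨a, haq, hqa⟩, ⟨c, hcq, hcq'⟩⟩ := hq
    have ha : σ q < σ a := hqa.lt_of_ne (σ.injective.ne haq.ne')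
    have hc : σ c < σ q := hcq'.lt_of_ne (σ.injective.ne hcq.ne)
    rcases lt_trichotomy a c with hac | rfl | hca
    · exact h.1 ⟨a, c, q, hac, hcq, hc, ha⟩
    · exact ha.asymm hc
    · exact h.2 ⟨c, a, q, hca, haq, hc, ha⟩

section RankPerm

variable {α : Type*} [LinearOrder α] {n : ℕ}

def rankPerm (f : Fin n → α) : Equiv.Perm (Fin n) :=
  (Tuple.sort f).symm

lemma rankPerm_lt_rankPerm_iff {f : Fin n → α} (hf : Injective f) (p q : Fin n) :
    rankPerm f p < rankPerm f q ↔ f p < f q := by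
  have hmono : StrictMono (f ∘ Tuple.sort f) :=
    (Tuple.monotone_sort f).strictMono_of_injective (hf.comp (Tuple.sort f).injective)
  simpa [rankPerm] using (hmono.lt_iff_lt (a := (Tuple.sort f).symm p)
    (b := (Tuple.sort f).symm q)).symm

end RankPerm

lemma Equiv.Perm.eq_of_lt_iff_lt_s6 {n : ℕ} {σ τ : Equiv.Perm (Fin n)}
    (h : ∀ p q, σ p < σ q ↔ τ p < τ q) : σ = τ := by
  have hmono : StrictMono (σ * τ⁻¹) := fun x y hxy => by simpa [h] using hxy
  rw [← mul_inv_eq_one]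
  exact Equiv.ext (congrFun hmono.eq_id)

section Encoding

variable {m : ℕ}

/-- Position `k + 1` becomes a new maximum when `k ∈ s` and a new minimum otherwise. -/
def signedKey (s : Finset (Fin m)) : Fin (m + 1) → ℤ :=
  Fin.cases 0 fun k => if k ∈ s then (k : ℤ) + 1 else -((k : ℤ) + 1)

@[simp] lemma signedKey_zero (s : Finset (Fin m)) : signedKey s 0 = 0 := rfl

@[simp] lemma signedKey_succ (s : Finset (Fin m)) (k : Fin m) :
    signedKey s k.succ = if k ∈ s then (k : ℤ) + 1 else -((k : ℤ) + 1) := rfl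

lemma signedKey_injective (s : Finset (Fin m)) : Injective (signedKey s) := by
  intro p q hpq
  induction p using Fin.cases <;> induction q using Fin.cases <;>
    simp only [signedKey_zero, signedKey_succ, Fin.succ_inj] at hpq ⊢ <;>
    split_ifs at hpq <;> omega

lemma isPrefixExtremal_signedKey (s : Finset (Fin m)) : IsPrefixExtremal (signedKey s) := by
  intro q
  induction q using Fin.cases with
  | zero => exact Or.inl fun p hp => absurd hp (Fin.not_lt_zero p)
  | succ k =>
    have hbound : ∀ p < k.succ, -(k : ℤ) ≤ signedKey s p ∧ signedKey s p ≤ k := by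
      intro p hp
      induction p using Fin.cases with
      | zero => simp
      | succ j =>
        have : (j : ℕ) < k := Fin.succ_lt_succ_iff.mp hp
        simp only [signedKey_succ]
        split_ifs <;> constructor <;> omega
    by_cases hk : k ∈ s
    · refine Or.inl fun p hp => ?_
      have := hbound p hp
      simp only [signedKey_succ, hk, if_true]
      omega
    · refine Or.inr fun p hp => ?_
      have := hbound p hp
      simp only [signedKey_succ, hk, if_false]
      omega

lemma signedKey_zero_lt_succ_iff (s : Finset (Fin m)) (k : Fin m) :
    signedKey s 0 < signedKey s k.succ ↔ k ∈ s := by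
  simp only [signedKey_zero, signedKey_succ]
  split_ifs with hk <;> simp only [hk, iff_true, iff_false, not_lt] <;> omega

def aboveFirst (σ : Equiv.Perm (Fin (m + 1))) : Finset (Fin m) :=
  {k | σ 0 < σ k.succ}

lemma card_aboveFirst (σ : Equiv.Perm (Fin (m + 1))) :
    #(aboveFirst σ) = #{q | σ 0 < σ q} := by
  rw [Fin.card_filter_univ_succ, if_neg (lt_irrefl _), aboveFirst]

lemma aboveFirst_rankPerm_signedKey (s : Finset (Fin m)) :
    aboveFirst (rankPerm (signedKey s)) = s := by
  ext k
  simp only [aboveFirst, mem_filter, mem_univ, true_and,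
    rankPerm_lt_rankPerm_iff (signedKey_injective s), signedKey_zero_lt_succ_iff]

lemma rankPerm_signedKey_aboveFirst {σ : Equiv.Perm (Fin (m + 1))} (hσ : IsPrefixExtremal σ) :
    rankPerm (signedKey (aboveFirst σ)) = σ := by
  refine Equiv.Perm.eq_of_lt_iff_lt_s6 fun p q => ?_
  rw [rankPerm_lt_rankPerm_iff (signedKey_injective _)]
  refine ((isPrefixExtremal_signedKey _).lt_iff_lt hσ (signedKey_injective _) σ.injective
    (fun q => ?_) p q)
  induction q using Fin.cases with
  | zero => simp
  | succ k => simp only [signedKey_zero_lt_succ_iff, aboveFirst, mem_filter, mem_univ, true_and]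

lemma isPrefixExtremal_rankPerm_signedKey (s : Finset (Fin m)) :
    IsPrefixExtremal (rankPerm (signedKey s)) :=
  (isPrefixExtremal_signedKey s).of_lt_iff_lt (rankPerm_lt_rankPerm_iff (signedKey_injective s))

end Encoding

section LongestIncreasing

variable {n : ℕ} {σ : Equiv.Perm (Fin n)}

lemma le_lis_s6 {s : Finset (Fin n)} (hs : StrictMonoOn σ s) : #s ≤ lis σ := by
  have hf := (s.orderEmbOfFin rfl).strictMono
  refine Nat.le_findGreatest (by simpa using card_le_univ s)
    ⟨s.orderEmbOfFin rfl, fun i j hij => hf hij, fun i j hij => ?_⟩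
  exact hs (s.orderEmbOfFin_mem rfl i) (s.orderEmbOfFin_mem rfl j) (hf hij)

lemma lis_le {L : ℕ}
    (h : ∀ k (f : Fin k → Fin n), StrictMono f → StrictMono (σ ∘ f) → k ≤ L) : lis σ ≤ L := by
  obtain ⟨f, hf, hσf⟩ := Nat.findGreatest_spec (P := fun k => ∃ f : Fin k → Fin n,
    (∀ i j : Fin k, i < j → f i < f j) ∧ (∀ i j : Fin k, i < j → σ (f i) < σ (f j)))
    (Nat.zero_le n) ⟨finZeroElim, finZeroElim, finZeroElim⟩
  exact h _ f hf hσf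

lemma IsPrefixExtremal.lis_eq {σ : Equiv.Perm (Fin (n + 1))} (hσ : IsPrefixExtremal σ) :
    lis σ = #{q | σ 0 < σ q} + 1 := by
  apply le_antisymm
  · refine lis_le fun k f hf hσf => ?_
    cases k with
    | zero => omega
    | succ k =>
      have hmaps : Set.MapsTo (f ∘ Fin.succ) (univ : Finset (Fin k))
          ({q | σ 0 < σ q} : Finset (Fin (n + 1))) := fun i _ => by
        simpa using (hσ.lt_iff_zero_lt (hf (Fin.succ_pos i))).1 (hσf (Fin.succ_pos i))
      simpa using card_le_card_of_injOn _ hmaps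
        (hf.injective.comp (Fin.succ_injective k)).injOn
  · have h0 : (0 : Fin (n + 1)) ∉ ({q | σ 0 < σ q} : Finset (Fin (n + 1))) := by simp
    rw [← card_insert_of_notMem h0]
    refine le_lis_s6 fun p _ q hq hpq => (hσ.lt_iff_zero_lt hpq).2 ?_
    simpa [(Fin.zero_le p).trans_lt hpq |>.ne'] using hq

end LongestIncreasing

lemma two_mul_sum_card_finset (α : Type*) [Fintype α] [DecidableEq α] :
    2 * ∑ s : Finset α, #s = Fintype.card α * 2 ^ Fintype.card α := by
  have hcompl : ∑ s : Finset α, #sᶜ = ∑ s : Finset α, #s :=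
    Equiv.sum_comp (compl_involutive.toPerm _) (fun s => #s)
  calc 2 * ∑ s : Finset α, #s = ∑ s : Finset α, (#s + #sᶜ) := by
        rw [sum_add_distrib, hcompl, two_mul]
    _ = Fintype.card α * 2 ^ Fintype.card α := by
        simp [card_add_card_compl, Fintype.card_finset, mul_comm]

lemma sum_lis_avoids312_avoids132 (m : ℕ) :
    ∑ σ ∈ univ.filter (fun σ : Equiv.Perm (Fin (m + 1)) => Avoids312 σ ∧ Avoids132 σ),
        (lis σ : ℚ) = ∑ s : Finset (Fin m), ((#s : ℚ) + 1) := by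
  have hS : ∀ σ ∈ univ.filter (fun σ : Equiv.Perm (Fin (m + 1)) => Avoids312 σ ∧ Avoids132 σ),
      IsPrefixExtremal σ :=
    fun σ hσ => (isPrefixExtremal_iff_avoids312_and_avoids132 σ).2 (mem_filter.1 hσ).2
  refine sum_nbij' aboveFirst (fun s => rankPerm (signedKey s)) (fun _ _ => mem_univ _)
    (fun s _ => mem_filter.2 ⟨mem_univ _, (isPrefixExtremal_iff_avoids312_and_avoids132 _).1
      (isPrefixExtremal_rankPerm_signedKey s)⟩)
    (fun σ hσ => rankPerm_signedKey_aboveFirst (hS σ hσ))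
    (fun s _ => aboveFirst_rankPerm_signedKey s) (fun σ hσ => ?_)
  rw [(hS σ hσ).lis_eq, card_aboveFirst]
  push_cast
  rfl

/-- the sum of `L(σ)` over `S_n(312,132)` equals `2^(n-1)·(n+1)/2`;
equivalently the expectation is `(n+1)/2`. -/
theorem stmt_6 (n : ℕ) (hn : 1 ≤ n) :
    ∑ σ ∈ Finset.univ.filter (fun σ : Equiv.Perm (Fin n) => Avoids312 σ ∧ Avoids132 σ),
        (lis σ : ℚ)
      = 2 ^ (n - 1) * ((n : ℚ) + 1) / 2 := by
  obtain ⟨m, rfl⟩ : ∃ m, n = m + 1 := ⟨n - 1, by omega⟩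
  have hcard : 2 * ∑ s : Finset (Fin m), (#s : ℚ) = m * 2 ^ m := by
    simpa using congrArg (Nat.cast (R := ℚ)) (two_mul_sum_card_finset (Fin m))
  rw [sum_lis_avoids312_avoids132, sum_add_distrib, sum_const, card_univ, Fintype.card_finset,
    Fintype.card_fin, Nat.add_sub_cancel]
  push_cast
  linear_combination hcard / 2
end

section
/- For every n ≥ 1, the sum over all permutations σ of {1,...,n} avoiding both 312 and 132 of L(σ)² equals 2^{n-1}·n(n+3)/4; equivalently the expectation of L² on S_n(312,132) equals n(n+3)/4. -/
/-!
A permutation avoiding 312 and 132 ends with its smallest or its largest value: otherwise the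
positions of the values `0` and `n`, both before the end, form a 132 or a 312 with the last
entry. Conversely, since the last entry of either pattern is a middle value of the pattern,
appending a new minimum or a new maximum to a permutation preserves avoidance of both. So
`S_{n+1}(312,132)` consists of two copies of `S_n(312,132)`: appending the maximum raises `L` by
one and, for `n ≥ 1`, appending the minimum leaves `L` unchanged. Hence
`∑_{S_{n+1}} F(L) = ∑_{S_n} (F(L+1) + F(L))`, and induction on `∑ 1`, `∑ L` and `∑ L²` gives the
formula.
-/

open Equiv Finset

section

variable {n : ℕ}

def HasIncSubseq (σ : Perm (Fin n)) (k : ℕ) : Prop :=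
  ∃ f : Fin k → Fin n, StrictMono f ∧ StrictMono (σ ∘ f)

lemma HasIncSubseq.le {σ : Perm (Fin n)} {k : ℕ} (h : HasIncSubseq σ k) : k ≤ n :=
  let ⟨_, hf, _⟩ := h; Fin.le_of_injective _ hf.injective

lemma le_lis_s7 {σ : Perm (Fin n)} {k : ℕ} (h : HasIncSubseq σ k) : k ≤ lis σ :=
  Nat.le_findGreatest h.le h

lemma hasIncSubseq_lis (σ : Perm (Fin n)) : HasIncSubseq σ (lis σ) :=
  Nat.findGreatest_spec (Nat.zero_le n) ⟨Fin.elim0, fun i => i.elim0, fun i => i.elim0⟩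

lemma lis_le_s7 (σ : Perm (Fin n)) : lis σ ≤ n :=
  Nat.findGreatest_le n

lemma one_le_lis (hn : n ≠ 0) (σ : Perm (Fin n)) : 1 ≤ lis σ :=
  le_lis_s7 ⟨fun _ => ⟨0, Nat.pos_of_ne_zero hn⟩, Subsingleton.strictMono _, Subsingleton.strictMono _⟩

lemma Fin.strictMono_snoc {α : Type*} [Preorder α] {m : ℕ} {f : Fin m → α} (hf : StrictMono f)
    {a : α} (ha : ∀ i, f i < a) : StrictMono (Fin.snoc f a : Fin (m + 1) → α) := by
  intro i j hij
  induction j using Fin.lastCases with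
  | last =>
    obtain ⟨i, rfl⟩ := Fin.exists_castSucc_eq.2 (Fin.ne_last_of_lt hij)
    simpa using ha i
  | cast j =>
    obtain ⟨i, rfl⟩ := Fin.exists_castSucc_eq.2 (Fin.ne_last_of_lt hij)
    simpa using hf (Fin.castSucc_lt_castSucc_iff.1 hij)

lemma ne_last_of_lt_of_lt {τ : Perm (Fin (n + 1))}
    (hτ : τ (Fin.last n) = 0 ∨ τ (Fin.last n) = Fin.last n)
    {a b k : Fin (n + 1)} (ha : τ a < τ k) (hb : τ k < τ b) : k ≠ Fin.last n := by
  rintro rfl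
  rcases hτ with h0 | hl
  · exact Fin.not_lt_zero _ (h0 ▸ ha)
  · exact (hl ▸ hb).not_ge (Fin.le_last _)

def InitPattern (σ : Perm (Fin n)) (τ : Perm (Fin (n + 1))) : Prop :=
  ∀ x y, τ x.castSucc < τ y.castSucc ↔ σ x < σ y

namespace InitPattern

variable {σ : Perm (Fin n)} {τ : Perm (Fin (n + 1))}

lemma hasIncSubseq (h : InitPattern σ τ) {k : ℕ} (hσ : HasIncSubseq σ k) : HasIncSubseq τ k := by
  obtain ⟨f, hf, hσf⟩ := hσ
  exact ⟨Fin.castSucc ∘ f, Fin.strictMono_castSucc.comp hf, fun i j hij => (h _ _).2 (hσf hij)⟩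

lemma hasIncSubseq_of_ne_last (h : InitPattern σ τ) {k : ℕ} {g : Fin k → Fin (n + 1)}
    (hg : StrictMono g) (hτg : StrictMono (τ ∘ g)) (hlast : ∀ i, g i ≠ Fin.last n) :
    HasIncSubseq σ k :=
  ⟨fun i => (g i).castPred (hlast i), fun _ _ hij => Fin.castPred_lt_castPred_iff.2 (hg hij),
    fun _ _ hij => (h _ _).1 (by simpa using hτg hij)⟩

lemma hasIncSubseq_of_succ (h : InitPattern σ τ) {k : ℕ} (hτ : HasIncSubseq τ (k + 1)) :
    HasIncSubseq σ k := by
  obtain ⟨g, hg, hτg⟩ := hτ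
  exact h.hasIncSubseq_of_ne_last (hg.comp Fin.strictMono_castSucc)
    (hτg.comp Fin.strictMono_castSucc)
    fun i => Fin.ne_last_of_lt (hg (Fin.castSucc_lt_last i))

lemma lis_le_lis (h : InitPattern σ τ) : lis σ ≤ lis τ :=
  le_lis_s7 (h.hasIncSubseq (hasIncSubseq_lis σ))

lemma lis_le_lis_add_one (h : InitPattern σ τ) : lis τ ≤ lis σ + 1 := by
  have hτ := hasIncSubseq_lis τ
  cases hk : lis τ with
  | zero => omega
  | succ k => rw [hk] at hτ; exact Nat.succ_le_succ (le_lis_s7 (h.hasIncSubseq_of_succ hτ))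

lemma avoids312_iff (h : InitPattern σ τ) (hτ : τ (Fin.last n) = 0 ∨ τ (Fin.last n) = Fin.last n) :
    Avoids312 τ ↔ Avoids312 σ := by
  refine not_congr ⟨?_, ?_⟩
  · rintro ⟨i, j, k, hij, hjk, h1, h2⟩
    obtain ⟨k, rfl⟩ := Fin.exists_castSucc_eq.2 (ne_last_of_lt_of_lt hτ h1 h2)
    obtain ⟨j, rfl⟩ := Fin.exists_castSucc_eq.2 (Fin.ne_last_of_lt hjk)
    obtain ⟨i, rfl⟩ := Fin.exists_castSucc_eq.2 (Fin.ne_last_of_lt hij)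
    exact ⟨i, j, k, Fin.castSucc_lt_castSucc_iff.1 hij, Fin.castSucc_lt_castSucc_iff.1 hjk,
      (h _ _).1 h1, (h _ _).1 h2⟩
  · rintro ⟨i, j, k, hij, hjk, h1, h2⟩
    exact ⟨i.castSucc, j.castSucc, k.castSucc, Fin.castSucc_lt_castSucc_iff.2 hij,
      Fin.castSucc_lt_castSucc_iff.2 hjk, (h _ _).2 h1, (h _ _).2 h2⟩

lemma avoids132_iff (h : InitPattern σ τ) (hτ : τ (Fin.last n) = 0 ∨ τ (Fin.last n) = Fin.last n) :
    Avoids132 τ ↔ Avoids132 σ := by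
  refine not_congr ⟨?_, ?_⟩
  · rintro ⟨i, j, k, hij, hjk, h1, h2⟩
    obtain ⟨k, rfl⟩ := Fin.exists_castSucc_eq.2 (ne_last_of_lt_of_lt hτ h1 h2)
    obtain ⟨j, rfl⟩ := Fin.exists_castSucc_eq.2 (Fin.ne_last_of_lt hjk)
    obtain ⟨i, rfl⟩ := Fin.exists_castSucc_eq.2 (Fin.ne_last_of_lt hij)
    exact ⟨i, j, k, Fin.castSucc_lt_castSucc_iff.1 hij, Fin.castSucc_lt_castSucc_iff.1 hjk,
      (h _ _).1 h1, (h _ _).1 h2⟩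
  · rintro ⟨i, j, k, hij, hjk, h1, h2⟩
    exact ⟨i.castSucc, j.castSucc, k.castSucc, Fin.castSucc_lt_castSucc_iff.2 hij,
      Fin.castSucc_lt_castSucc_iff.2 hjk, (h _ _).2 h1, (h _ _).2 h2⟩

lemma avoids312_and_avoids132_iff (h : InitPattern σ τ)
    (hτ : τ (Fin.last n) = 0 ∨ τ (Fin.last n) = Fin.last n) :
    Avoids312 τ ∧ Avoids132 τ ↔ Avoids312 σ ∧ Avoids132 σ :=
  and_congr (h.avoids312_iff hτ) (h.avoids132_iff hτ)

end InitPattern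

def appendMax (σ : Perm (Fin n)) : Perm (Fin (n + 1)) :=
  finSuccEquivLast.symm.permCongr σ.optionCongr

/-- `finRotate` raises every value by one and sends the new maximum `n` to `0`. -/
def appendMin (σ : Perm (Fin n)) : Perm (Fin (n + 1)) :=
  finRotate (n + 1) * appendMax σ

@[simp] lemma appendMax_castSucc (σ : Perm (Fin n)) (i : Fin n) :
    appendMax σ i.castSucc = (σ i).castSucc := by
  simp [appendMax]

@[simp] lemma appendMax_last (σ : Perm (Fin n)) : appendMax σ (Fin.last n) = Fin.last n := by
  simp [appendMax]

@[simp] lemma appendMin_castSucc (σ : Perm (Fin n)) (i : Fin n) :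
    appendMin σ i.castSucc = (σ i).succ := by
  simp [appendMin, Fin.coeSucc_eq_succ]

@[simp] lemma appendMin_last (σ : Perm (Fin n)) : appendMin σ (Fin.last n) = 0 := by
  simp [appendMin]

lemma initPattern_appendMax (σ : Perm (Fin n)) : InitPattern σ (appendMax σ) := by
  simp [InitPattern]

lemma initPattern_appendMin (σ : Perm (Fin n)) : InitPattern σ (appendMin σ) := by
  simp [InitPattern]

lemma appendMax_injective : Function.Injective (appendMax (n := n)) :=
  finSuccEquivLast.symm.permCongr.injective.comp optionCongr_injective

lemma appendMin_injective : Function.Injective (appendMin (n := n)) :=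
  fun _ _ h => appendMax_injective (mul_left_cancel h)

lemma appendMax_ne_appendMin (hn : n ≠ 0) (σ σ' : Perm (Fin n)) : appendMax σ ≠ appendMin σ' :=
  fun h => hn (by simpa using congrArg (· (Fin.last n)) h)

lemma exists_appendMax_eq {τ : Perm (Fin (n + 1))} (hτ : τ (Fin.last n) = Fin.last n) :
    ∃ σ, appendMax σ = τ := by
  refine ⟨removeNone (finSuccEquivLast.permCongr τ), ?_⟩
  ext x
  simp [appendMax, map_equiv_removeNone, hτ]

lemma exists_appendMin_eq {τ : Perm (Fin (n + 1))} (hτ : τ (Fin.last n) = 0) :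
    ∃ σ, appendMin σ = τ := by
  obtain ⟨σ, hσ⟩ := exists_appendMax_eq (τ := (finRotate (n + 1))⁻¹ * τ)
    (by rw [Perm.mul_apply, hτ, Perm.inv_eq_iff_eq, finRotate_last])
  exact ⟨σ, by rw [appendMin, hσ, mul_inv_cancel_left]⟩

lemma lis_appendMax (σ : Perm (Fin n)) : lis (appendMax σ) = lis σ + 1 := by
  refine le_antisymm (initPattern_appendMax σ).lis_le_lis_add_one (le_lis_s7 ?_)
  obtain ⟨f, hf, hσf⟩ := hasIncSubseq_lis σ
  refine ⟨Fin.snoc (Fin.castSucc ∘ f) (Fin.last n), ?_, ?_⟩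
  · exact Fin.strictMono_snoc (Fin.strictMono_castSucc.comp hf) fun i => Fin.castSucc_lt_last _
  · rw [Fin.comp_snoc, appendMax_last]
    exact Fin.strictMono_snoc (fun i j hij => by simpa using hσf hij)
      fun i => by simp [Fin.castSucc_lt_last]

lemma lis_appendMin (hn : n ≠ 0) (σ : Perm (Fin n)) : lis (appendMin σ) = lis σ := by
  refine le_antisymm ?_ (initPattern_appendMin σ).lis_le_lis
  obtain ⟨g, hg, hτg⟩ := hasIncSubseq_lis (appendMin σ)
  -- The final entry `0` of `appendMin σ` can only occur in increasing subsequences of length 1.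
  by_cases hlast : ∃ i, g i = Fin.last n
  · obtain ⟨i, hi⟩ := hlast
    have hall : ∀ j, j = i := fun j => by
      rcases lt_trichotomy j i with hji | rfl | hij
      · simpa [hi] using hτg hji
      · rfl
      · exact absurd (hg hij) (hi ▸ (Fin.le_last _).not_gt)
    calc lis (appendMin σ) ≤ 1 := by
          simpa using Fintype.card_le_one_iff.2 fun a b => (hall a).trans (hall b).symm
      _ ≤ lis σ := one_le_lis hn σ
  · push Not at hlast
    exact le_lis_s7 ((initPattern_appendMin σ).hasIncSubseq_of_ne_last hg hτg hlast)

lemma last_eq_zero_or_last {τ : Perm (Fin (n + 1))} (h312 : Avoids312 τ) (h132 : Avoids132 τ) :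
    τ (Fin.last n) = 0 ∨ τ (Fin.last n) = Fin.last n := by
  by_contra! h
  have hpos : 0 < τ (Fin.last n) := Fin.pos_of_ne_zero h.1
  have hlt : τ (Fin.last n) < Fin.last n := Fin.lt_last_iff_ne_last.2 h.2
  obtain ⟨a, ha⟩ := τ.surjective 0
  obtain ⟨b, hb⟩ := τ.surjective (Fin.last n)
  have ha_lt : a < Fin.last n := Fin.lt_last_iff_ne_last.2 fun h' => h.1 (h' ▸ ha)
  have hb_lt : b < Fin.last n := Fin.lt_last_iff_ne_last.2 fun h' => h.2 (h' ▸ hb)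
  have hab : a ≠ b := fun h' => (hpos.trans hlt).ne (by rw [← ha, ← hb, h'])
  rcases lt_or_gt_of_ne hab with hab | hba
  · exact h132 ⟨a, b, Fin.last n, hab, hb_lt, ha ▸ hpos, hb ▸ hlt⟩
  · exact h312 ⟨b, a, Fin.last n, hba, ha_lt, ha ▸ hpos, hb ▸ hlt⟩

def avoiding312And132 (n : ℕ) : Finset (Perm (Fin n)) :=
  univ.filter fun σ => Avoids312 σ ∧ Avoids132 σ

lemma avoiding312And132_succ (n : ℕ) :
    avoiding312And132 (n + 1) =
      (avoiding312And132 n).image appendMax ∪ (avoiding312And132 n).image appendMin := by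
  ext τ
  simp only [avoiding312And132, mem_union, mem_image, mem_filter, mem_univ, true_and]
  constructor
  · rintro ⟨h312, h132⟩
    rcases last_eq_zero_or_last h312 h132 with h0 | hl
    · obtain ⟨σ, rfl⟩ := exists_appendMin_eq h0
      exact .inr ⟨σ, ((initPattern_appendMin σ).avoids312_and_avoids132_iff (.inl h0)).1
        ⟨h312, h132⟩, rfl⟩
    · obtain ⟨σ, rfl⟩ := exists_appendMax_eq hl
      exact .inl ⟨σ, ((initPattern_appendMax σ).avoids312_and_avoids132_iff (.inr hl)).1
        ⟨h312, h132⟩, rfl⟩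
  · rintro (⟨σ, hσ, rfl⟩ | ⟨σ, hσ, rfl⟩)
    · exact ((initPattern_appendMax σ).avoids312_and_avoids132_iff (.inr (appendMax_last σ))).2 hσ
    · exact ((initPattern_appendMin σ).avoids312_and_avoids132_iff (.inl (appendMin_last σ))).2 hσ

lemma sum_avoiding312And132_succ {M : Type*} [AddCommMonoid M] (hn : n ≠ 0) (F : ℕ → M) :
    ∑ τ ∈ avoiding312And132 (n + 1), F (lis τ) =
      ∑ σ ∈ avoiding312And132 n, (F (lis σ + 1) + F (lis σ)) := by
  rw [avoiding312And132_succ, sum_union, sum_image appendMax_injective.injOn,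
    sum_image appendMin_injective.injOn, sum_add_distrib]
  · simp only [lis_appendMax, lis_appendMin hn]
  · simp only [disjoint_left, mem_image]
    rintro _ ⟨σ, -, rfl⟩ ⟨σ', -, h⟩
    exact appendMax_ne_appendMin hn σ σ' h.symm

lemma avoiding312And132_one : avoiding312And132 1 = univ := by decide

lemma lis_eq_one (σ : Perm (Fin 1)) : lis σ = 1 :=
  le_antisymm (lis_le_s7 σ) (one_le_lis one_ne_zero σ)

lemma card_avoiding312And132_succ (n : ℕ) : #(avoiding312And132 (n + 1)) = 2 ^ n := by
  induction n with
  | zero => simp [avoiding312And132_one]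
  | succ n ih =>
    rw [card_eq_sum_ones, sum_avoiding312And132_succ (F := fun _ => 1) n.succ_ne_zero, sum_const,
      ih, smul_eq_mul, pow_succ]

lemma sum_lis_avoiding312And132_succ (n : ℕ) :
    ∑ σ ∈ avoiding312And132 (n + 1), (lis σ : ℚ) = 2 ^ n * (n + 2) / 2 := by
  induction n with
  | zero => simp [avoiding312And132_one, lis_eq_one]
  | succ n ih =>
    rw [sum_avoiding312And132_succ (F := fun k => (k : ℚ)) n.succ_ne_zero]
    simp only [Nat.cast_add, Nat.cast_one, sum_add_distrib, ih, sum_const,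
      card_avoiding312And132_succ]
    ring

lemma sum_lis_sq_avoiding312And132_succ (n : ℕ) :
    ∑ σ ∈ avoiding312And132 (n + 1), (lis σ : ℚ) ^ 2 = 2 ^ n * ((n + 1) * (n + 4)) / 4 := by
  induction n with
  | zero => simp [avoiding312And132_one, lis_eq_one]
  | succ n ih =>
    rw [sum_avoiding312And132_succ (F := fun k => (k : ℚ) ^ 2) n.succ_ne_zero]
    simp only [Nat.cast_add, Nat.cast_one, add_sq, sum_add_distrib, ih, sum_const, ← mul_sum,
      ← sum_mul, card_avoiding312And132_succ, sum_lis_avoiding312And132_succ]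
    ring

end

/-- the sum of `L(σ)²` over `S_n(312,132)` equals `2^(n-1)·n(n+3)/4`. -/
theorem stmt_7 (n : ℕ) (hn : 1 ≤ n) :
    ∑ σ ∈ Finset.univ.filter (fun σ : Equiv.Perm (Fin n) => Avoids312 σ ∧ Avoids132 σ),
        (lis σ : ℚ) ^ 2
      = 2 ^ (n - 1) * ((n : ℚ) * (n + 3)) / 4 := by
  obtain ⟨n, rfl⟩ := Nat.exists_eq_add_of_le' hn
  rw [← avoiding312And132, sum_lis_sq_avoiding312And132_succ]
  push_cast
  ring
end

section
/- For every n ≥ 1, the sum over all permutations σ of {1,...,n} avoiding both 312 and 213 of L(σ) equals 2^{n-1}·(n+1)/2; in particular the expected longest increasing subsequence length on S_n(312,213) equals (n+1)/2. -/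
/-!
A permutation avoids both `312` and `213` exactly when it has no valley `σ j < σ i, σ k` with
`i < j < k`, that is, when it increases up to the position of its maximum and decreases after it.
Such a permutation is determined by the set `T` of values to the left of its maximum, every subset
`T` of the `n - 1` non-maximal values occurs, and the longest increasing subsequence has length
`#T + 1` (an increasing subsequence meets the decreasing part at most once). Hence the sum is
`∑_{T ⊆ [n-1]} (#T + 1) = (n - 1) 2^(n-2) + 2^(n-1)`.
-/

open Finset

lemma Fin.val_le_of_strictMono {k n : ℕ} {f : Fin k → Fin n} (hf : StrictMono f) (i : Fin k) :
    (i : ℕ) ≤ f i := by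
  have : #(Iic i) ≤ #(Iic (f i)) :=
    card_le_card_of_injOn f (fun j hj => mem_Iic.2 (hf.monotone (mem_Iic.1 hj))) hf.injective.injOn
  simpa using this

def IsUnimodalAt {n : ℕ} (σ : Equiv.Perm (Fin n)) (p : Fin n) : Prop :=
  StrictMonoOn σ (Set.Iic p) ∧ StrictAntiOn σ (Set.Ici p)

namespace IsUnimodalAt

variable {n : ℕ} {σ : Equiv.Perm (Fin n)} {p : Fin n}

theorem lis_eq (h : IsUnimodalAt σ p) : lis σ = p + 1 := by
  rw [lis, Nat.findGreatest_eq_iff]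
  have le_peak (i : Fin (p + 1)) : Fin.castLE p.isLt i ≤ p := Nat.le_of_lt_succ i.isLt
  refine ⟨p.isLt, fun _ => ⟨Fin.castLE p.isLt, fun i j hij => hij,
    fun i j hij => h.1 (le_peak i) (le_peak j) hij⟩, fun k hk _ ⟨f, hf, hσf⟩ => ?_⟩
  -- two of the chosen positions lie at or after the peak, where `σ` decreases
  have hp : p ≤ f ⟨p, by omega⟩ := Fin.val_le_of_strictMono (fun i j => hf i j) ⟨p, by omega⟩
  have hlt : f ⟨p, by omega⟩ < f ⟨p + 1, hk⟩ := hf _ _ (Fin.mk_lt_mk.2 p.val.lt_succ_self)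
  exact (hσf _ _ (Fin.mk_lt_mk.2 p.val.lt_succ_self)).asymm (h.2 hp (hp.trans hlt.le) hlt)

theorem avoids312_and_avoids213 (h : IsUnimodalAt σ p) : Avoids312 σ ∧ Avoids213 σ := by
  have no_valley : ∀ i j k : Fin n, i < j → j < k → σ j < σ i → σ j < σ k → False := by
    intro i j k hij hjk hji hjk'
    rcases le_total j p with hjp | hpj
    · exact (h.1 (hij.le.trans hjp) hjp hij).asymm hji
    · exact (h.2 hpj (hpj.trans hjk.le) hjk).asymm hjk'
  exact ⟨fun ⟨i, j, k, hij, hjk, h1, h2⟩ => no_valley i j k hij hjk (h1.trans h2) h1,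
    fun ⟨i, j, k, hij, hjk, h1, h2⟩ => no_valley i j k hij hjk h1 (h1.trans h2)⟩

end IsUnimodalAt

theorem Equiv.Perm.apply_lt_last {m : ℕ} (σ : Equiv.Perm (Fin (m + 1))) {i : Fin (m + 1)}
    (hi : i ≠ σ.symm (Fin.last m)) : σ i < Fin.last m := by
  rwa [Fin.lt_last_iff_ne_last, Ne, ← Equiv.eq_symm_apply]

theorem isUnimodalAt_symm_last {m : ℕ} {σ : Equiv.Perm (Fin (m + 1))}
    (h312 : Avoids312 σ) (h213 : Avoids213 σ) : IsUnimodalAt σ (σ.symm (Fin.last m)) := by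
  set p := σ.symm (Fin.last m)
  have lt_peak {i : Fin (m + 1)} (hi : i ≠ p) : σ i < σ p := by
    rw [Equiv.apply_symm_apply]
    exact σ.apply_lt_last hi
  constructor
  · intro i hi j hj hij
    rcases (Set.mem_Iic.1 hj).lt_or_eq with hjp | rfl
    · exact (σ.injective.ne hij.ne).lt_or_gt.resolve_right fun hji =>
        h213 ⟨i, j, p, hij, hjp, hji, lt_peak (hij.trans hjp).ne⟩
    · exact lt_peak hij.ne
  · intro i hi j hj hij
    rcases (Set.mem_Ici.1 hi).lt_or_eq with hpi | rfl
    · exact (σ.injective.ne hij.ne').lt_or_gt.resolve_right fun hij' =>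
        h312 ⟨p, i, j, hpi, hij, hij', lt_peak (hpi.trans hij).ne'⟩
    · exact lt_peak hij.ne'

theorem avoids312_and_avoids213_iff {m : ℕ} {σ : Equiv.Perm (Fin (m + 1))} :
    Avoids312 σ ∧ Avoids213 σ ↔ IsUnimodalAt σ (σ.symm (Fin.last m)) :=
  ⟨fun h => isUnimodalAt_symm_last h.1 h.2, IsUnimodalAt.avoids312_and_avoids213⟩

section LinearOrder

variable {α : Type*} [LinearOrder α] {s : Finset α} {a : α}

theorem Finset.card_filter_lt_lt_card (ha : a ∈ s) : #{x ∈ s | x < a} < #s :=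
  card_lt_card (filter_ssubset.2 ⟨a, ha, lt_irrefl a⟩)

theorem Finset.card_filter_gt_lt_card (ha : a ∈ s) : #{x ∈ s | a < x} < #s :=
  card_lt_card (filter_ssubset.2 ⟨a, ha, lt_irrefl a⟩)

end LinearOrder

section UnimodalPerm

variable {n : ℕ}

/-- The position of the value `v` in the permutation that lists `T` in increasing order and then
`Tᶜ` in decreasing order. -/
def unimodalPos (T : Finset (Fin n)) (v : Fin n) : ℕ :=
  if v ∈ T then #{u ∈ T | u < v} else #T + #{u ∈ Tᶜ | v < u}

variable {T : Finset (Fin n)}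

theorem unimodalPos_lt_card_iff {v : Fin n} : unimodalPos T v < #T ↔ v ∈ T := by
  unfold unimodalPos
  split_ifs with hv
  · exact iff_of_true (card_filter_lt_lt_card hv) hv
  · exact iff_of_false (by omega) hv

theorem unimodalPos_lt (T : Finset (Fin n)) (v : Fin n) : unimodalPos T v < n := by
  have hn : #T + #Tᶜ = n := by rw [card_add_card_compl, Fintype.card_fin]
  unfold unimodalPos
  split_ifs with hv
  · exact (card_filter_lt_lt_card hv).trans_le (by omega)
  · have := card_filter_gt_lt_card (mem_compl.2 hv)
    omega

theorem strictMonoOn_unimodalPos : StrictMonoOn (unimodalPos T) T := by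
  intro v hv w hw hvw
  simp only [unimodalPos, if_pos (mem_coe.1 hv), if_pos (mem_coe.1 hw)]
  refine card_lt_card ((ssubset_iff_of_subset fun u hu => ?_).2 ⟨v, ?_, ?_⟩)
  · exact mem_filter.2 ⟨(mem_filter.1 hu).1, (mem_filter.1 hu).2.trans hvw⟩
  · exact mem_filter.2 ⟨hv, hvw⟩
  · exact fun h => lt_irrefl v (mem_filter.1 h).2

theorem strictAntiOn_unimodalPos : StrictAntiOn (unimodalPos T) (↑Tᶜ : Set (Fin n)) := by
  intro v hv w hw hvw
  simp only [unimodalPos, if_neg (mem_compl.1 (mem_coe.1 hv)), if_neg (mem_compl.1 (mem_coe.1 hw))]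
  refine Nat.add_lt_add_left (card_lt_card ((ssubset_iff_of_subset fun u hu => ?_).2 ⟨w, ?_, ?_⟩)) _
  · exact mem_filter.2 ⟨(mem_filter.1 hu).1, hvw.trans (mem_filter.1 hu).2⟩
  · exact mem_filter.2 ⟨hw, hvw⟩
  · exact fun h => lt_irrefl w (mem_filter.1 h).2

theorem unimodalPos_injective : Function.Injective (unimodalPos T) := by
  intro v w hvw
  by_cases hv : v ∈ T <;> by_cases hw : w ∈ T
  · exact strictMonoOn_unimodalPos.injOn hv hw hvw
  · exact absurd (hvw ▸ unimodalPos_lt_card_iff.2 hv) (mt unimodalPos_lt_card_iff.1 hw)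
  · exact absurd (hvw ▸ unimodalPos_lt_card_iff.2 hw) (mt unimodalPos_lt_card_iff.1 hv)
  · exact strictAntiOn_unimodalPos.injOn (mem_compl.2 hv) (mem_compl.2 hw) hvw

noncomputable def unimodalPerm (T : Finset (Fin n)) : Equiv.Perm (Fin n) :=
  (Equiv.ofBijective (fun v => (⟨unimodalPos T v, unimodalPos_lt T v⟩ : Fin n))
    (Finite.injective_iff_bijective.1 fun _ _ h => unimodalPos_injective (Fin.mk.inj h))).symm

theorem val_unimodalPerm_symm_apply (T : Finset (Fin n)) (v : Fin n) :
    ((unimodalPerm T).symm v : ℕ) = unimodalPos T v :=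
  rfl

def valuesBefore (σ : Equiv.Perm (Fin n)) (p : Fin n) : Finset (Fin n) :=
  (Iio p).map σ.toEmbedding

variable {σ : Equiv.Perm (Fin n)} {p : Fin n}

theorem mem_valuesBefore {v : Fin n} : v ∈ valuesBefore σ p ↔ σ.symm v < p := by
  simp [valuesBefore, mem_map_equiv]

theorem card_valuesBefore : #(valuesBefore σ p) = p := by
  simp [valuesBefore]

theorem IsUnimodalAt.unimodalPerm_valuesBefore (h : IsUnimodalAt σ p) :
    unimodalPerm (valuesBefore σ p) = σ := by
  refine Equiv.symm_bijective.injective (Equiv.ext fun v => Fin.ext ?_)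
  obtain ⟨q, rfl⟩ := σ.surjective v
  rw [val_unimodalPerm_symm_apply, Equiv.symm_apply_apply, unimodalPos]
  split_ifs with hq
  · rw [mem_valuesBefore, Equiv.symm_apply_apply] at hq
    suffices {u ∈ valuesBefore σ p | u < σ q} = (Iio q).map σ.toEmbedding by
      rw [this, card_map, Fin.card_Iio]
    ext u
    obtain ⟨r, rfl⟩ := σ.surjective u
    simp only [mem_filter, mem_valuesBefore, mem_map_equiv, mem_Iio, Equiv.symm_apply_apply]
    exact ⟨fun ⟨hr, hrq⟩ => (h.1.lt_iff_lt hr.le hq.le).1 hrq,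
      fun hrq => ⟨hrq.trans hq, h.1 (hrq.trans hq).le hq.le hrq⟩⟩
  · rw [mem_valuesBefore, Equiv.symm_apply_apply, not_lt] at hq
    suffices {u ∈ (valuesBefore σ p)ᶜ | σ q < u} = (Ico p q).map σ.toEmbedding by
      rw [this, card_map, Fin.card_Ico, card_valuesBefore]
      omega
    ext u
    obtain ⟨r, rfl⟩ := σ.surjective u
    simp only [mem_filter, mem_compl, mem_valuesBefore, mem_map_equiv, mem_Ico,
      Equiv.symm_apply_apply, not_lt]
    exact ⟨fun ⟨hr, hqr⟩ => ⟨hr, (h.2.lt_iff_gt hq hr).1 hqr⟩,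
      fun ⟨hr, hrq⟩ => ⟨hr, h.2 hr hq hrq⟩⟩

end UnimodalPerm

section LastNotMem

variable {m : ℕ} {T : Finset (Fin (m + 1))}

theorem val_unimodalPerm_symm_last (hT : Fin.last m ∉ T) :
    ((unimodalPerm T).symm (Fin.last m) : ℕ) = #T := by
  rw [val_unimodalPerm_symm_apply, unimodalPos, if_neg hT,
    filter_false_of_mem fun u _ => not_lt.2 (Fin.le_last u), card_empty, add_zero]

theorem isUnimodalAt_unimodalPerm (hT : Fin.last m ∉ T) :
    IsUnimodalAt (unimodalPerm T) ((unimodalPerm T).symm (Fin.last m)) := by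
  set σ := unimodalPerm T
  have hp : (σ.symm (Fin.last m) : ℕ) = #T := val_unimodalPerm_symm_last hT
  have pos_apply (a : Fin (m + 1)) : unimodalPos T (σ a) = a := by
    rw [← val_unimodalPerm_symm_apply, Equiv.symm_apply_apply]
  constructor
  · intro a _ b hb hab
    rcases (Set.mem_Iic.1 hb).lt_or_eq with hbp | rfl
    · have mem {c : Fin (m + 1)} (hc : c < σ.symm (Fin.last m)) : σ c ∈ T :=
        unimodalPos_lt_card_iff.1 (by rw [pos_apply]; omega)
      exact (strictMonoOn_unimodalPos.lt_iff_lt (mem (hab.trans hbp)) (mem hbp)).1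
        (by rwa [pos_apply, pos_apply])
    · rw [Equiv.apply_symm_apply]
      exact σ.apply_lt_last hab.ne
  · intro a ha b hb hab
    have not_mem {c : Fin (m + 1)} (hc : σ.symm (Fin.last m) ≤ c) : σ c ∈ Tᶜ :=
      mem_compl.2 (mt unimodalPos_lt_card_iff.2 (by rw [pos_apply]; omega))
    exact (strictAntiOn_unimodalPos.lt_iff_gt (not_mem ha) (not_mem hb)).1
      (by rwa [pos_apply, pos_apply])

theorem valuesBefore_unimodalPerm (hT : Fin.last m ∉ T) :
    valuesBefore (unimodalPerm T) ((unimodalPerm T).symm (Fin.last m)) = T := by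
  ext v
  rw [mem_valuesBefore, Fin.lt_def, val_unimodalPerm_symm_apply, val_unimodalPerm_symm_last hT,
    unimodalPos_lt_card_iff]

end LastNotMem

theorem Finset.two_mul_sum_card_powerset {α : Type*} (s : Finset α) :
    2 * ∑ t ∈ s.powerset, #t = #s * 2 ^ #s := by
  rw [sum_powerset_apply_card (fun k => k), sum_congr rfl fun k _ => smul_eq_mul _ _]
  simp only [mul_comm ((#s).choose _), Nat.sum_range_mul_choose]
  rcases (#s).eq_zero_or_pos with h | h
  · simp [h]
  · rw [mul_left_comm, ← pow_succ', Nat.sub_add_cancel h]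

theorem sum_lis_avoids312_avoids213 (m : ℕ) :
    ∑ σ ∈ univ.filter (fun σ : Equiv.Perm (Fin (m + 1)) => Avoids312 σ ∧ Avoids213 σ), lis σ
      = ∑ T ∈ (univ.erase (Fin.last m)).powerset, (#T + 1) := by
  have last_notMem {T : Finset (Fin (m + 1))} :
      T ∈ (univ.erase (Fin.last m)).powerset ↔ Fin.last m ∉ T := by
    simp [subset_erase]
  refine sum_nbij' (fun σ => valuesBefore σ (σ.symm (Fin.last m))) unimodalPerm ?_ ?_ ?_ ?_ ?_
  · intro σ _
    simp [last_notMem, mem_valuesBefore]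
  · intro T hT
    exact mem_filter.2 ⟨mem_univ _,
      avoids312_and_avoids213_iff.2 (isUnimodalAt_unimodalPerm (last_notMem.1 hT))⟩
  · intro σ hσ
    exact (avoids312_and_avoids213_iff.1 (mem_filter.1 hσ).2).unimodalPerm_valuesBefore
  · intro T hT
    exact valuesBefore_unimodalPerm (last_notMem.1 hT)
  · intro σ hσ
    rw [(avoids312_and_avoids213_iff.1 (mem_filter.1 hσ).2).lis_eq, card_valuesBefore]

/-- the sum of `L(σ)` over `S_n(312,213)` equals `2^(n-1)·(n+1)/2`. -/
theorem stmt_8 (n : ℕ) (hn : 1 ≤ n) :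
    ∑ σ ∈ Finset.univ.filter (fun σ : Equiv.Perm (Fin n) => Avoids312 σ ∧ Avoids213 σ),
        (lis σ : ℚ)
      = 2 ^ (n - 1) * ((n : ℚ) + 1) / 2 := by
  obtain ⟨m, rfl⟩ := Nat.exists_eq_add_of_le' hn
  have key : 2 * ∑ σ ∈ univ.filter (fun σ : Equiv.Perm (Fin (m + 1)) => Avoids312 σ ∧ Avoids213 σ),
      lis σ = 2 ^ m * (m + 2) := by
    rw [sum_lis_avoids312_avoids213, sum_add_distrib, mul_add, two_mul_sum_card_powerset,
      sum_const, card_powerset, card_erase_of_mem (mem_univ _), card_univ, Fintype.card_fin,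
      smul_eq_mul, Nat.add_sub_cancel]
    ring
  rw [← Nat.cast_sum, Nat.add_sub_cancel, eq_div_iff two_ne_zero, mul_comm]
  exact_mod_cast key
end

section
/- For all x with |x| small, the generating function F_{132}(x,q) = Σ_{n≥0} Σ_{σ ∈ S_n(312,132)} x^n q^{L(σ)} equals (1-x)/(1-x-xq). Equivalently, for all n ≥ 1 and 1 ≤ k ≤ n, the number of permutations in S_n(312,132) whose longest increasing subsequence has length exactly k equals the binomial coefficient C(n-1, k-1). -/
/-!
A permutation avoids both 312 and 132 exactly when each of its entries is a left-to-right maximum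
or a left-to-right minimum. For such a `σ` and positions `i < j` we have `σ i < σ j` iff `j` is a
left-to-right maximum, so `σ` is determined by the set `S` of positions of its left-to-right
maxima; `S` contains the first position and is otherwise arbitrary, since this rule defines a
strict total order on positions whose ranks form such a permutation. Every entry of an increasing
subsequence except the first is not a left-to-right minimum, so the left-to-right maxima form a
longest increasing subsequence and `L(σ) = #S`. Choosing `S \ {0}` gives `C(n-1, k-1)`.
-/

open Finset

theorem exists_equiv_fin_lt_iff {α : Type*} [Fintype α] (r : α → α → Prop)
    [IsStrictTotalOrder α r] {n : ℕ} (hα : Fintype.card α = n) :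
    ∃ e : α ≃ Fin n, ∀ a b, e a < e b ↔ r a b := by
  classical
  let := linearOrderOfSTO r
  exact ⟨(Fintype.orderIsoFinOfCardEq α hα).symm.toEquiv,
    fun _ _ => (Fintype.orderIsoFinOfCardEq α hα).symm.lt_iff_lt⟩

namespace Equiv.Perm

variable {n : ℕ} {σ τ : Perm (Fin n)}

theorem val_eq_card_filter_lt (σ : Perm (Fin n)) (i : Fin n) :
    (σ i : ℕ) = #{l | σ l < σ i} := by
  rw [← Fin.card_Iio, ← card_map σ.symm.toEmbedding]
  congr 1
  ext l
  simp

theorem eq_of_forall_lt_iff (h : ∀ i j, σ i < σ j ↔ τ i < τ j) : σ = τ :=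
  Equiv.ext fun i => Fin.ext <| by simp only [val_eq_card_filter_lt, h]

def IsLRMax (σ : Perm (Fin n)) (i : Fin n) : Prop := ∀ j < i, σ j < σ i

def IsLRMin (σ : Perm (Fin n)) (i : Fin n) : Prop := ∀ j < i, σ i < σ j

def IsLRExtremal (σ : Perm (Fin n)) : Prop := ∀ i, σ.IsLRMax i ∨ σ.IsLRMin i

instance (σ : Perm (Fin n)) : DecidablePred σ.IsLRMax := fun _ => by
  unfold IsLRMax; infer_instance

instance (σ : Perm (Fin n)) : Decidable σ.IsLRExtremal := by
  unfold IsLRExtremal IsLRMin; infer_instance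

def lrMaxima (σ : Perm (Fin n)) : Finset (Fin n) := {i | σ.IsLRMax i}

@[simp]
theorem mem_lrMaxima {i : Fin n} : i ∈ σ.lrMaxima ↔ σ.IsLRMax i := by
  simp [lrMaxima]

theorem zero_mem_lrMaxima [NeZero n] (σ : Perm (Fin n)) : 0 ∈ σ.lrMaxima :=
  mem_lrMaxima.2 fun j hj => absurd hj (Fin.not_lt_zero j)

theorem avoids312_and_avoids132_iff : Avoids312 σ ∧ Avoids132 σ ↔ σ.IsLRExtremal := by
  constructor
  · rintro ⟨h312, h132⟩ i
    refine or_iff_not_imp_left.2 fun hmax j hj => ?_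
    obtain ⟨l, hl, hil⟩ : ∃ l < i, σ i < σ l := by
      simp only [IsLRMax, not_forall, not_lt, exists_prop] at hmax
      obtain ⟨l, hl, hle⟩ := hmax
      exact ⟨l, hl, hle.lt_of_ne (σ.injective.ne hl.ne')⟩
    by_contra! hij
    have hji : σ j < σ i := hij.lt_of_ne (σ.injective.ne hj.ne)
    rcases lt_trichotomy j l with hjl | rfl | hlj
    · exact h132 ⟨j, l, i, hjl, hl, hji, hil⟩
    · exact hil.asymm hji
    · exact h312 ⟨l, j, i, hlj, hj, hji, hil⟩
  · intro hσ
    constructor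
    · rintro ⟨i, j, k, hij, hjk, hjk', hki⟩
      rcases hσ k with hk | hk
      exacts [(hk i (hij.trans hjk)).asymm hki, (hk j hjk).asymm hjk']
    · rintro ⟨i, j, k, hij, hjk, hik, hkj⟩
      rcases hσ k with hk | hk
      exacts [(hk j hjk).asymm hkj, (hk i (hij.trans hjk)).asymm hik]

/-- `RecordOrder S i j` says `σ i < σ j` for a permutation `σ` all of whose entries are
left-to-right extrema, the maxima sitting at the positions `S`. -/
def RecordOrder (S : Finset (Fin n)) (i j : Fin n) : Prop :=
  (i < j ∧ j ∈ S) ∨ (j < i ∧ i ∉ S)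

instance (S : Finset (Fin n)) : IsStrictTotalOrder (Fin n) (RecordOrder S) where
  irrefl i := by simp [RecordOrder]
  trans i j k := by unfold RecordOrder; grind
  trichotomous i j := by unfold RecordOrder; grind

theorem IsLRExtremal.lt_iff_recordOrder (hσ : σ.IsLRExtremal) (i j : Fin n) :
    σ i < σ j ↔ RecordOrder σ.lrMaxima i j := by
  rcases lt_trichotomy i j with hij | rfl | hji
  · simp only [RecordOrder, hij, true_and, hij.not_gt, false_and, or_false, mem_lrMaxima]
    exact ⟨fun h => (hσ j).resolve_right fun hj => (hj i hij).asymm h, fun hj => hj i hij⟩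
  · simp [RecordOrder]
  · simp only [RecordOrder, hji, hji.not_gt, true_and, false_and, false_or, mem_lrMaxima]
    exact ⟨fun h hi => (hi j hji).asymm h, fun hi => (hσ i).resolve_left hi j hji⟩

theorem IsLRExtremal.eq_of_lrMaxima_eq (hσ : σ.IsLRExtremal) (hτ : τ.IsLRExtremal)
    (h : σ.lrMaxima = τ.lrMaxima) : σ = τ :=
  eq_of_forall_lt_iff fun i j => by rw [hσ.lt_iff_recordOrder, hτ.lt_iff_recordOrder, h]

theorem exists_lrMaxima_eq [NeZero n] {S : Finset (Fin n)} (hS : 0 ∈ S) :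
    ∃ σ : Perm (Fin n), σ.IsLRExtremal ∧ σ.lrMaxima = S := by
  obtain ⟨σ, hσ⟩ := exists_equiv_fin_lt_iff (RecordOrder S) (Fintype.card_fin n)
  have hmax {i j : Fin n} (hji : j < i) (hi : i ∈ S) : σ j < σ i :=
    (hσ _ _).2 (.inl ⟨hji, hi⟩)
  have hmin {i j : Fin n} (hji : j < i) (hi : i ∉ S) : σ i < σ j :=
    (hσ _ _).2 (.inr ⟨hji, hi⟩)
  refine ⟨σ, fun i => ?_, ?_⟩
  · by_cases hi : i ∈ S
    exacts [.inl fun j hj => hmax hj hi, .inr fun j hj => hmin hj hi]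
  · ext i
    refine ⟨fun hi => ?_, fun hi => mem_lrMaxima.2 fun j hj => hmax hj hi⟩
    rcases eq_or_ne i 0 with rfl | hi0
    · exact hS
    · have h0i : 0 < i := Fin.pos_iff_ne_zero.2 hi0
      by_contra hiS
      exact (hmin h0i hiS).asymm (mem_lrMaxima.1 hi 0 h0i)

theorem lis_eq_card_of_strictMonoOn {s : Finset (Fin n)} (hs : StrictMonoOn σ s)
    (hmax : ∀ t : Finset (Fin n), StrictMonoOn σ t → #t ≤ #s) : lis σ = #s := by
  unfold lis
  rw [Nat.findGreatest_eq_iff]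
  refine ⟨(card_le_univ s).trans_eq (Fintype.card_fin n), fun _ => ?_,
    fun m hsm _ ⟨f, hf, hσf⟩ => ?_⟩
  · exact ⟨s.orderEmbOfFin rfl, (s.orderEmbOfFin rfl).strictMono, fun i j hij =>
      hs (s.orderEmbOfFin_mem rfl i) (s.orderEmbOfFin_mem rfl j) (by simpa using hij)⟩
  · have hσf : StrictMonoOn σ (univ.image f : Finset (Fin n)) := by
      simp only [coe_image, coe_univ, Set.image_univ]
      rintro _ ⟨a, rfl⟩ _ ⟨b, rfl⟩ hab
      exact hσf a b ((show StrictMono f from hf).lt_iff_lt.1 hab)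
    have hcard := hmax _ hσf
    rw [card_image_of_injective _ (show StrictMono f from hf).injective, card_univ,
      Fintype.card_fin] at hcard
    omega

theorem strictMonoOn_lrMaxima (σ : Perm (Fin n)) : StrictMonoOn σ (σ.lrMaxima : Set (Fin n)) :=
  fun _ _ _ hj hij => mem_lrMaxima.1 hj _ hij

theorem IsLRExtremal.card_le_card_lrMaxima [NeZero n] (hσ : σ.IsLRExtremal) {t : Finset (Fin n)}
    (ht : StrictMonoOn σ t) : #t ≤ #σ.lrMaxima := by
  obtain rfl | hne := t.eq_empty_or_nonempty
  · simp
  have hsub : t ⊆ insert (t.min' hne) (σ.lrMaxima.erase 0) := by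
    intro x hx
    rcases (t.min'_le x hx).eq_or_lt with hx' | hlt
    · exact mem_insert.2 (.inl hx'.symm)
    · have hxmax : σ.IsLRMax x :=
        (hσ x).resolve_right fun hmin => (hmin _ hlt).asymm (ht (t.min'_mem hne) hx hlt)
      exact mem_insert_of_mem (mem_erase.2 ⟨(pos_of_gt hlt).ne', mem_lrMaxima.2 hxmax⟩)
  calc #t ≤ #(insert (t.min' hne) (σ.lrMaxima.erase 0)) := card_le_card hsub
    _ ≤ #(σ.lrMaxima.erase 0) + 1 := card_insert_le _ _
    _ = #σ.lrMaxima := card_erase_add_one σ.zero_mem_lrMaxima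

theorem IsLRExtremal.lis_eq_card_lrMaxima [NeZero n] (hσ : σ.IsLRExtremal) :
    lis σ = #σ.lrMaxima :=
  lis_eq_card_of_strictMonoOn σ.strictMonoOn_lrMaxima fun _ => hσ.card_le_card_lrMaxima

theorem card_filter_isLRExtremal_and_card_lrMaxima_eq [NeZero n] {k : ℕ} (hk : 1 ≤ k) :
    #{σ : Perm (Fin n) | σ.IsLRExtremal ∧ #σ.lrMaxima = k} = (n - 1).choose (k - 1) := by
  have hcard : #((univ.erase (0 : Fin n)).powersetCard (k - 1)) = (n - 1).choose (k - 1) := by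
    simp
  rw [← hcard]
  refine card_bij (fun σ _ => σ.lrMaxima.erase 0) (fun σ hσ => ?_) (fun σ hσ τ hτ h => ?_)
    (fun T hT => ?_)
  · rw [mem_filter] at hσ
    rw [mem_powersetCard, card_erase_of_mem σ.zero_mem_lrMaxima, hσ.2.2]
    exact ⟨erase_subset_erase _ (subset_univ _), rfl⟩
  · rw [mem_filter] at hσ hτ
    refine hσ.2.1.eq_of_lrMaxima_eq hτ.2.1 ?_
    rw [← insert_erase σ.zero_mem_lrMaxima, ← insert_erase τ.zero_mem_lrMaxima, h]
  · rw [mem_powersetCard] at hT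
    have h0T : 0 ∉ T := fun h => by simpa using hT.1 h
    obtain ⟨σ, hσ, hσT⟩ := exists_lrMaxima_eq (mem_insert_self 0 T)
    refine ⟨σ, mem_filter.2 ⟨mem_univ _, hσ, ?_⟩, by rw [hσT, erase_insert h0T]⟩
    rw [hσT, card_insert_of_notMem h0T, hT.2]
    omega

end Equiv.Perm

theorem stmt_12_general (n : ℕ) (hn : 1 ≤ n) (k : ℕ) (hk1 : 1 ≤ k) :
    (Finset.univ.filter
        (fun σ : Equiv.Perm (Fin n) => Avoids312 σ ∧ Avoids132 σ ∧ lis σ = k)).card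
      = Nat.choose (n - 1) (k - 1) := by
  have : NeZero n := ⟨by omega⟩
  rw [← Equiv.Perm.card_filter_isLRExtremal_and_card_lrMaxima_eq hk1]
  congr 1
  refine filter_congr fun σ _ => ?_
  rw [← and_assoc, Equiv.Perm.avoids312_and_avoids132_iff]
  exact and_congr_right fun hσ => by rw [hσ.lis_eq_card_lrMaxima]

/-- for `n ≥ 1` and `1 ≤ k ≤ n`, the number of permutations in
`S_n(312,132)` with longest increasing subsequence length exactly `k` is `C(n-1,k-1)`. -/
theorem stmt_12 (n : ℕ) (hn : 1 ≤ n) (k : ℕ) (hk1 : 1 ≤ k) (hk2 : k ≤ n) :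
    (Finset.univ.filter
        (fun σ : Equiv.Perm (Fin n) => Avoids312 σ ∧ Avoids132 σ ∧ lis σ = k)).card
      = Nat.choose (n - 1) (k - 1) :=
  stmt_12_general n hn k hk1
end

section
/- For every n ≥ 1, the sum over all permutations σ in S_n(312,1234) of L(σ) equals (n⁴-4n³+9n²-6n+4)/4; equivalently the expected longest increasing subsequence length on S_n(312,1234) equals 3(n⁴-4n³+9n²-6n+4)/(n⁴-4n³+11n²-8n+12). -/
namespace Pattern312

variable {n : ℕ}

def valAt (σ : Equiv.Perm (Fin n)) (i : ℕ) : ℕ :=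
  if h : i < n then σ ⟨i, h⟩ else 0

def ascents (σ : Equiv.Perm (Fin n)) : Finset ℕ :=
  (Finset.range (n - 1)).filter fun i => valAt σ i < valAt σ (i + 1)

section Basic

variable (σ : Equiv.Perm (Fin n))

lemma valAt_val (x : Fin n) : valAt σ x = σ x := by
  simp [valAt, x.2]

lemma valAt_lt {i : ℕ} (hi : i < n) : valAt σ i < n := by
  simp [valAt, hi]

lemma valAt_inj {i j : ℕ} (hi : i < n) (hj : j < n) (h : valAt σ i = valAt σ j) : i = j := by
  simp only [valAt, dif_pos hi, dif_pos hj] at h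
  simpa using σ.injective (Fin.val_injective h)

lemma exists_valAt_eq {v : ℕ} (hv : v < n) : ∃ i < n, valAt σ i = v :=
  ⟨σ.symm ⟨v, hv⟩, (σ.symm ⟨v, hv⟩).2, by simp [valAt_val]⟩

lemma ext_valAt {τ : Equiv.Perm (Fin n)} (h : ∀ i < n, valAt σ i = valAt τ i) : σ = τ :=
  Equiv.ext fun x => Fin.ext <| by simpa [valAt_val] using h x x.2

end Basic

variable {σ τ : Equiv.Perm (Fin n)}

lemma mem_ascents {i : ℕ} : i ∈ ascents σ ↔ i + 1 < n ∧ valAt σ i < valAt σ (i + 1) := by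
  simp only [ascents, Finset.mem_filter, Finset.mem_range]
  omega

lemma valAt_succ_lt_of_not_mem_ascents {t : ℕ} (ht : t + 1 < n) (h : t ∉ ascents σ) :
    valAt σ (t + 1) < valAt σ t := by
  have hne : valAt σ t ≠ valAt σ (t + 1) := fun he => by
    have := valAt_inj σ (by omega) ht he; omega
  rw [mem_ascents] at h
  omega

lemma valAt_add_sub_le {l r : ℕ} (h : ∀ t, l ≤ t → t < r → t ∉ ascents σ) (hlr : l ≤ r)
    (hr : r < n) : valAt σ r + (r - l) ≤ valAt σ l := by
  induction r, hlr using Nat.le_induction with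
  | base => simp
  | succ r hlr ih =>
    have := valAt_succ_lt_of_not_mem_ascents hr (h r hlr (by omega))
    have := ih (fun t ht ht' => h t ht (by omega)) (by omega)
    omega

lemma exists_mem_ascents_of_valAt_lt {p q : ℕ} (hpq : p < q) (hq : q < n)
    (hv : valAt σ p < valAt σ q) : ∃ u ∈ ascents σ, p ≤ u ∧ u < q := by
  by_contra! h
  have := valAt_add_sub_le (fun t ht ht' hmem => absurd (h t hmem ht) (by omega)) hpq.le hq
  omega

lemma avoids312_iff : Avoids312 σ ↔
    ∀ i j k, i < j → j < k → k < n → valAt σ j < valAt σ k → valAt σ k < valAt σ i → False := by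
  constructor
  · intro h i j k hij hjk hk h₁ h₂
    refine h ⟨⟨i, by omega⟩, ⟨j, by omega⟩, ⟨k, hk⟩, hij, hjk, ?_, ?_⟩ <;>
      rw [Fin.lt_def, ← valAt_val, ← valAt_val] <;> assumption
  · rintro h ⟨i, j, k, hij, hjk, h₁, h₂⟩
    exact h i j k hij hjk k.2 (by simpa [valAt_val] using h₁) (by simpa [valAt_val] using h₂)

/-- A later occurrence of the skipped value `v` would form a 312 pattern with the descent. -/
lemma exists_lt_valAt_eq_of_between (hσ : Avoids312 σ) {t v : ℕ} (ht : t + 1 < n)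
    (hv₁ : valAt σ (t + 1) < v) (hv₂ : v < valAt σ t) : ∃ p < t, valAt σ p = v := by
  obtain ⟨p, hp, rfl⟩ := exists_valAt_eq σ (hv₂.trans (valAt_lt σ (by omega)))
  refine ⟨p, ?_, rfl⟩
  by_contra! htp
  have hpt : p ≠ t := by rintro rfl; omega
  have hpt₁ : p ≠ t + 1 := by rintro rfl; omega
  exact avoids312_iff.1 hσ t (t + 1) p (by omega) (by omega) hp hv₁ hv₂

lemma ascent_lt_of_valAt_eq_top (hσ : Avoids312 σ) {q a : ℕ} (hq : q < n)
    (htop : valAt σ q = n - 1) (ha : a ∈ ascents σ) : a < q := by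
  rw [mem_ascents] at ha
  have hlt := valAt_lt σ ha.1
  by_contra! hqa
  rcases hqa.eq_or_lt with rfl | hqa
  · omega
  have hne : valAt σ (a + 1) ≠ valAt σ q := fun he => by
    have := valAt_inj σ ha.1 hq he; omega
  exact avoids312_iff.1 hσ q a (a + 1) hqa (by omega) ha.1 ha.2 (by omega)

lemma pred_mem_ascents_of_valAt_eq_top {q : ℕ} (hq : q < n) (hq₀ : 0 < q)
    (htop : valAt σ q = n - 1) : q - 1 ∈ ascents σ := by
  have hne : valAt σ (q - 1) ≠ valAt σ q := fun he => by
    have := valAt_inj σ (by omega) hq he; omega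
  have := valAt_lt σ (show q - 1 < n by omega)
  rw [mem_ascents, Nat.sub_add_cancel hq₀]
  omega

lemma valAt_zero_eq_top (hn : 1 ≤ n) (h : ascents σ = ∅) : valAt σ 0 = n - 1 := by
  obtain ⟨q, hq, htop⟩ := exists_valAt_eq σ (show n - 1 < n by omega)
  obtain rfl | hq₀ := q.eq_zero_or_pos
  · exact htop
  · simpa [h] using pred_mem_ascents_of_valAt_eq_top hq hq₀ htop

lemma valAt_succ_eq_top (hσ : Avoids312 σ) {j : ℕ} (hj : j ∈ ascents σ)
    (hmax : ∀ a ∈ ascents σ, a ≤ j) : valAt σ (j + 1) = n - 1 := by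
  have hjn := (mem_ascents.1 hj).1
  obtain ⟨q, hq, htop⟩ := exists_valAt_eq σ (show n - 1 < n by omega)
  have hjq := ascent_lt_of_valAt_eq_top hσ hq htop hj
  have := hmax _ (pred_mem_ascents_of_valAt_eq_top hq (by omega) htop)
  rwa [show j + 1 = q by omega]

/-- At a descent `t` a 312-avoider moves to the largest value below `σ t` not used before. -/
lemma valAt_succ_le_of_agree (hσ : Avoids312 σ) {t : ℕ} (ht : t + 1 < n)
    (hagree : ∀ s ≤ t, valAt σ s = valAt τ s) (hτ : valAt τ (t + 1) < valAt τ t) :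
    valAt τ (t + 1) ≤ valAt σ (t + 1) := by
  by_contra! hlt
  obtain ⟨p, hp, hpv⟩ :=
    exists_lt_valAt_eq_of_between hσ ht hlt (by rw [hagree t le_rfl]; exact hτ)
  rw [hagree p hp.le] at hpv
  have := valAt_inj τ (by omega) ht hpv
  omega

lemma eq_of_ascents_eq (hσ : Avoids312 σ) (hτ : Avoids312 τ) (hA : ascents σ = ascents τ)
    (h₀ : valAt σ 0 = valAt τ 0) (hjump : ∀ a ∈ ascents σ, valAt σ (a + 1) = valAt τ (a + 1)) :
    σ = τ := by
  suffices h : ∀ t < n, ∀ s ≤ t, valAt σ s = valAt τ s from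
    ext_valAt σ fun i hi => h i hi i le_rfl
  intro t
  induction t with
  | zero => intro _ s hs; rwa [Nat.le_zero.1 hs]
  | succ t ih =>
    intro ht s hs
    rcases Nat.le_succ_iff.1 hs with hs | rfl
    · exact ih (by omega) s hs
    by_cases ha : t ∈ ascents σ
    · exact hjump t ha
    have hagree := ih (by omega)
    exact le_antisymm
      (valAt_succ_le_of_agree hτ ht (fun s hs => (hagree s hs).symm)
        (valAt_succ_lt_of_not_mem_ascents ht ha))
      (valAt_succ_le_of_agree hσ ht hagree (valAt_succ_lt_of_not_mem_ascents ht (hA ▸ ha)))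

lemma exists_strictMono_lis (σ : Equiv.Perm (Fin n)) :
    ∃ f : Fin (lis σ) → Fin n, StrictMono f ∧ StrictMono (σ ∘ f) :=
  Nat.findGreatest_spec (P := fun k => ∃ f : Fin k → Fin n, StrictMono f ∧ StrictMono (σ ∘ f))
    (Nat.zero_le n) ⟨Fin.elim0, fun i => i.elim0, fun i => i.elim0⟩

lemma le_lis_iff {k : ℕ} :
    k ≤ lis σ ↔ ∃ f : Fin k → Fin n, StrictMono f ∧ StrictMono (σ ∘ f) := by
  constructor
  · intro hk
    obtain ⟨f, hf, hσf⟩ := exists_strictMono_lis σ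
    exact ⟨f ∘ Fin.castLE hk, hf.comp (Fin.strictMono_castLE hk),
      hσf.comp (Fin.strictMono_castLE hk)⟩
  · rintro ⟨f, hf, hσf⟩
    have hkn : k ≤ n := by simpa using Fintype.card_le_of_injective f hf.injective
    exact Nat.le_findGreatest (P := fun k => ∃ f : Fin k → Fin n,
      StrictMono f ∧ StrictMono (σ ∘ f)) hkn ⟨f, hf, hσf⟩

lemma avoids1234_iff_lis_le : Avoids1234 σ ↔ lis σ ≤ 3 := by
  rw [← not_lt, Nat.lt_iff_add_one_le, le_lis_iff, not_iff_not]
  constructor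
  · rintro ⟨i, j, k, l, hij, hjk, hkl, h₁, h₂, h₃⟩
    exact ⟨![i, j, k, l], by simp [Fin.strictMono_iff_lt_succ, Fin.forall_fin_succ, *],
      by simp [Fin.strictMono_iff_lt_succ, Fin.forall_fin_succ, *]⟩
  · rintro ⟨f, hf, hσf⟩
    exact ⟨f 0, f 1, f 2, f 3, hf (by decide), hf (by decide), hf (by decide),
      hσf (by decide), hσf (by decide), hσf (by decide)⟩

lemma card_le_lis {s : Finset ℕ} (hs : ∀ x ∈ s, x < n) (hmono : StrictMonoOn (valAt σ) s) :
    s.card ≤ lis σ := by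
  let e := s.orderEmbOfFin rfl
  have he : ∀ t, e t ∈ s := s.orderEmbOfFin_mem rfl
  refine le_lis_iff.2 ⟨fun t => ⟨e t, hs _ (he t)⟩, fun a b hab => e.strictMono hab,
    fun a b hab => ?_⟩
  have := hmono (he a) (he b) (e.strictMono hab)
  simpa [valAt, hs _ (he a), hs _ (he b)] using this

/-- The number of ascents before a position strictly increases along an increasing
subsequence. -/
lemma lis_le_card_ascents_add_one (σ : Equiv.Perm (Fin n)) : lis σ ≤ (ascents σ).card + 1 := by
  obtain ⟨f, hf, hσf⟩ := exists_strictMono_lis σ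
  let before : Fin (lis σ) → ℕ := fun s => ((ascents σ).filter (· < (f s : ℕ))).card
  have hmono : StrictMono before := by
    intro a b hab
    obtain ⟨u, hu, hau, hub⟩ := exists_mem_ascents_of_valAt_lt (σ := σ) (hf hab) (f b).2
      (by simpa [valAt_val] using hσf hab)
    refine Finset.card_lt_card ⟨Finset.monotone_filter_right _ fun x _ hx => ?_, fun hsub => ?_⟩
    · exact lt_trans hx (hf hab)
    · have := (Finset.mem_filter.1 (hsub (Finset.mem_filter.2 ⟨hu, hub⟩))).2
      omega
  simpa using Finset.card_le_card_of_injOn before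
    (s := Finset.univ) (t := Finset.range ((ascents σ).card + 1))
    (fun s _ => Finset.mem_range.2 (Nat.lt_succ_of_le (Finset.card_filter_le _ _)))
    hmono.injective.injOn

lemma strictMonoOn_valAt_insert_zero (hσ : Avoids312 σ) :
    StrictMonoOn (valAt σ) (insert 0 ((ascents σ).image (· + 1)) : Finset ℕ) := by
  intro p hp q hq hpq
  simp only [Finset.coe_insert, Finset.coe_image, Set.mem_insert_iff, Set.mem_image,
    Finset.mem_coe] at hp hq
  obtain rfl | ⟨j, hj, rfl⟩ := hq
  · omega
  rw [mem_ascents] at hj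
  rcases (Nat.lt_succ_iff.1 hpq).eq_or_lt with rfl | hpj
  · exact hj.2
  have hne : valAt σ (j + 1) ≠ valAt σ p := fun he => by
    have := valAt_inj σ hj.1 (by omega) he; omega
  by_contra! hle
  exact avoids312_iff.1 hσ p j (j + 1) hpj (by omega) hj.1 hj.2 (by omega)

lemma lis_eq_card_ascents_add_one (hn : 1 ≤ n) (hσ : Avoids312 σ) :
    lis σ = (ascents σ).card + 1 := by
  refine le_antisymm (lis_le_card_ascents_add_one σ) ?_
  have h0 : 0 ∉ (ascents σ).image (· + 1) := by simp
  calc (ascents σ).card + 1 = (insert 0 ((ascents σ).image (· + 1))).card := by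
        rw [Finset.card_insert_of_notMem h0,
          Finset.card_image_of_injective _ (add_left_injective 1)]
    _ ≤ lis σ := card_le_lis (fun x hx => by
        simp only [Finset.mem_insert, Finset.mem_image, mem_ascents] at hx
        omega) (strictMonoOn_valAt_insert_zero hσ)

lemma valAt_revPerm {i : ℕ} (hi : i < n) :
    valAt (Fin.revPerm : Equiv.Perm (Fin n)) i = n - 1 - i := by
  simp only [valAt, dif_pos hi, Fin.revPerm_apply, Fin.val_rev]
  omega

lemma ascents_revPerm : ascents (Fin.revPerm : Equiv.Perm (Fin n)) = ∅ := by
  ext t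
  simp only [mem_ascents, Finset.notMem_empty, iff_false, not_and]
  intro ht
  rw [valAt_revPerm ht, valAt_revPerm (by omega)]
  omega

lemma avoids312_revPerm : Avoids312 (Fin.revPerm : Equiv.Perm (Fin n)) :=
  avoids312_iff.2 fun i j k hij hjk hk => by
    rw [valAt_revPerm (show j < n by omega), valAt_revPerm hk]
    omega

noncomputable def permOfNat (f : ℕ → ℕ) (hf : ∀ i < n, f i < n)
    (hinj : ∀ i < n, ∀ j < n, f i = f j → i = j) : Equiv.Perm (Fin n) :=
  Equiv.ofBijective (fun i => ⟨f i, hf i i.2⟩) <| Finite.injective_iff_bijective.1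
    fun i j h => Fin.ext (hinj i i.2 j j.2 (congrArg Fin.val h))

section permOfNat

variable {f : ℕ → ℕ} {hf : ∀ i < n, f i < n} {hinj : ∀ i < n, ∀ j < n, f i = f j → i = j}

lemma valAt_permOfNat {i : ℕ} (hi : i < n) : valAt (permOfNat f hf hinj) i = f i := by
  simp [valAt, permOfNat, hi]

lemma ascents_permOfNat :
    ascents (permOfNat f hf hinj) = (Finset.range (n - 1)).filter fun i => f i < f (i + 1) :=
  Finset.filter_congr fun i hi => by
    rw [Finset.mem_range] at hi
    rw [valAt_permOfNat (by omega), valAt_permOfNat (by omega)]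

lemma avoids312_permOfNat (h : ∀ i j k, i < j → j < k → k < n → f j < f k → f k < f i → False) :
    Avoids312 (permOfNat f hf hinj) :=
  avoids312_iff.2 fun i j k hij hjk hk => by
    rw [valAt_permOfNat (show i < n by omega), valAt_permOfNat (show j < n by omega),
      valAt_permOfNat hk]
    exact h i j k hij hjk hk

end permOfNat

/-- The values of the 312-avoider with ascents at `i` and `j` (only at `i` when `j = n - 1`),
first value `c` and value `M` after the first ascent, whose descending runs take the largest
unused values. -/
def runSeq (n i j c M t : ℕ) : ℕ :=
  if t ≤ i then c - t
  else if t ≤ j then (if t ≤ i + M - c then M + i + 1 - t else M - t)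
  else if t ≤ j + n - 1 - M then n + j - t
  else if t < n + i - c then n + i - t
  else n - 1 - t

def RunParams (n i j c M : ℕ) : Prop :=
  i ≤ c ∧ c < M ∧ i < j ∧ j ≤ M ∧ M < n ∧ (M + 1 = n → j = M)

section runPerm

variable {i j c M : ℕ}

lemma runSeq_lt (h : RunParams n i j c M) : ∀ t < n, runSeq n i j c M t < n := by
  obtain ⟨_, _, _, _, _, _⟩ := h
  intro t ht
  unfold runSeq
  split_ifs <;> omega

lemma runSeq_injOn (h : RunParams n i j c M) :
    ∀ t < n, ∀ s < n, runSeq n i j c M t = runSeq n i j c M s → t = s := by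
  obtain ⟨_, _, _, _, _, _⟩ := h
  intro t ht s hs
  unfold runSeq
  split_ifs <;> omega

noncomputable def runPerm (h : RunParams n i j c M) : Equiv.Perm (Fin n) :=
  permOfNat (runSeq n i j c M) (runSeq_lt h) (runSeq_injOn h)

lemma valAt_runPerm (h : RunParams n i j c M) {t : ℕ} (ht : t < n) :
    valAt (runPerm h) t = runSeq n i j c M t :=
  valAt_permOfNat ht

lemma avoids312_runPerm (h : RunParams n i j c M) : Avoids312 (runPerm h) := by
  obtain ⟨_, _, _, _, _, _⟩ := h
  refine avoids312_permOfNat fun t s u hts hsu hu => ?_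
  unfold runSeq
  split_ifs <;> omega

lemma ascents_runPerm (h : RunParams n i j c M) :
    ascents (runPerm h) = if j + 1 < n then {i, j} else {i} := by
  obtain ⟨_, _, _, _, _, _⟩ := h
  unfold runPerm
  rw [ascents_permOfNat]
  ext t
  split_ifs <;>
  · simp only [Finset.mem_filter, Finset.mem_range, Finset.mem_insert, Finset.mem_singleton]
    unfold runSeq
    split_ifs <;> omega

lemma valAt_runPerm_zero (h : RunParams n i j c M) : valAt (runPerm h) 0 = c := by
  have ⟨_, _, _, _, _, _⟩ := h
  rw [valAt_runPerm h (by omega), runSeq]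
  split_ifs <;> omega

lemma valAt_runPerm_succ (h : RunParams n i j c M) : valAt (runPerm h) (i + 1) = M := by
  have ⟨_, _, _, _, _, _⟩ := h
  rw [valAt_runPerm h (by omega), runSeq]
  split_ifs <;> omega

end runPerm

def avoiders312WithAscents (n k : ℕ) : Finset (Equiv.Perm (Fin n)) :=
  Finset.univ.filter fun σ => Avoids312 σ ∧ (ascents σ).card = k

lemma mem_avoiders312WithAscents {k : ℕ} :
    σ ∈ avoiders312WithAscents n k ↔ Avoids312 σ ∧ (ascents σ).card = k := by
  simp [avoiders312WithAscents]

lemma avoiders312WithAscents_zero (hn : 1 ≤ n) :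
    avoiders312WithAscents n 0 = {Fin.revPerm} := by
  ext σ
  rw [mem_avoiders312WithAscents, Finset.mem_singleton, Finset.card_eq_zero]
  constructor
  · rintro ⟨hσ, hA⟩
    refine eq_of_ascents_eq hσ avoids312_revPerm (by rw [hA, ascents_revPerm]) ?_ (by simp [hA])
    rw [valAt_zero_eq_top hn hA, valAt_revPerm (by omega)]
    omega
  · rintro rfl
    exact ⟨avoids312_revPerm, ascents_revPerm⟩

/-- `⟨c, i⟩` stands for the avoider `runPerm` with first value `c` and single ascent `i`. -/
def oneAscentParams (n : ℕ) : Finset (Σ _ : ℕ, ℕ) :=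
  (Finset.range (n - 1)).sigma fun c => Finset.range (c + 1)

lemma mem_oneAscentParams {c i : ℕ} :
    (⟨c, i⟩ : Σ _ : ℕ, ℕ) ∈ oneAscentParams n ↔ i ≤ c ∧ c + 2 ≤ n := by
  simp only [oneAscentParams, Finset.mem_sigma, Finset.mem_range]
  omega

lemma card_oneAscentParams : (oneAscentParams n).card = n.choose 2 := by
  rw [oneAscentParams, Finset.card_sigma]
  simp only [Finset.card_range]
  rcases n with _ | m
  · rfl
  · rw [Nat.add_sub_cancel, Nat.choose_two_right, ← Finset.sum_range_id,
      Finset.sum_range_succ', add_zero]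

lemma runParams_of_mem_oneAscentParams {p : Σ _ : ℕ, ℕ} (hp : p ∈ oneAscentParams n) :
    RunParams n p.2 (n - 1) p.1 (n - 1) := by
  obtain ⟨c, i⟩ := p
  dsimp only
  rw [mem_oneAscentParams] at hp
  exact ⟨hp.1, by omega, by omega, le_rfl, by omega, fun _ => rfl⟩

lemma mem_oneAscentParams_of_ascents_eq (hσ : Avoids312 σ) {i : ℕ} (hA : ascents σ = {i}) :
    (⟨valAt σ 0, i⟩ : Σ _ : ℕ, ℕ) ∈ oneAscentParams n := by
  have hi : i + 1 < n := (mem_ascents.1 (hA ▸ Finset.mem_singleton_self i)).1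
  have htop : valAt σ (i + 1) = n - 1 := valAt_succ_eq_top hσ (by simp [hA]) (by simp [hA])
  have hne : valAt σ 0 ≠ n - 1 := fun he => by
    have := valAt_inj σ (by omega) hi (he.trans htop.symm); omega
  have := valAt_add_sub_le (σ := σ) (l := 0) (r := i)
    (fun t _ ht => by simp [hA]; omega) (Nat.zero_le i) (by omega)
  have := valAt_lt σ (show 0 < n by omega)
  rw [mem_oneAscentParams]
  omega

lemma card_avoiders312WithAscents_one : (avoiders312WithAscents n 1).card = n.choose 2 := by
  rw [← card_oneAscentParams, eq_comm]
  refine Finset.card_bij (fun p hp => runPerm (runParams_of_mem_oneAscentParams hp)) ?_ ?_ ?_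
  · intro ⟨c, i⟩ hp
    have h : RunParams n i (n - 1) c (n - 1) := runParams_of_mem_oneAscentParams hp
    show runPerm h ∈ _
    rw [mem_avoiders312WithAscents, ascents_runPerm h, if_neg (by omega)]
    exact ⟨avoids312_runPerm h, Finset.card_singleton i⟩
  · intro ⟨c, i⟩ hp ⟨c', i'⟩ hp' he
    have h₀ := congrArg (valAt · 0) he
    have hA := congrArg ascents he
    simp only [valAt_runPerm_zero] at h₀
    rw [ascents_runPerm, ascents_runPerm, if_neg (by omega), if_neg (by omega),
      Finset.singleton_inj] at hA
    simp only at hA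
    rw [h₀, hA]
  · intro σ hσ
    obtain ⟨hσ, hA⟩ := mem_avoiders312WithAscents.1 hσ
    obtain ⟨i, hA⟩ := Finset.card_eq_one.1 hA
    have hmem := mem_oneAscentParams_of_ascents_eq hσ hA
    have h : RunParams n i (n - 1) (valAt σ 0) (n - 1) := runParams_of_mem_oneAscentParams hmem
    have hAr : ascents (runPerm h) = {i} := by
      rw [ascents_runPerm, if_neg (by omega)]
    refine ⟨_, hmem, eq_of_ascents_eq (avoids312_runPerm h) hσ (hAr.trans hA.symm)
      (valAt_runPerm_zero h) ?_⟩
    simp only [hAr, Finset.mem_singleton, forall_eq]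
    rw [valAt_runPerm_succ, valAt_succ_eq_top hσ (j := i) (by simp [hA]) (by simp [hA])]

/-- `⟨M, c, i, j⟩` stands for the avoider `runPerm` with first value `c`, ascents `i < j` and
value `M` after the first ascent. -/
def twoAscentParams (n : ℕ) : Finset (Σ _ : ℕ, Σ _ : ℕ, Σ _ : ℕ, ℕ) :=
  (Finset.range (n - 1)).sigma fun M => (Finset.range M).sigma fun c =>
    (Finset.range (c + 1)).sigma fun i => Finset.Ioc i M

lemma mem_twoAscentParams {M c i j : ℕ} :
    (⟨M, c, i, j⟩ : Σ _ : ℕ, Σ _ : ℕ, Σ _ : ℕ, ℕ) ∈ twoAscentParams n ↔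
      i ≤ c ∧ c < M ∧ i < j ∧ j ≤ M ∧ M + 2 ≤ n := by
  simp only [twoAscentParams, Finset.mem_sigma, Finset.mem_range, Finset.mem_Ioc]
  omega

lemma card_twoAscentParams (hn : 1 ≤ n) :
    ((twoAscentParams n).card : ℚ) = n * (n - 1) ^ 2 * (n - 2) / 12 := by
  have inner : ∀ M c : ℕ, c ≤ M →
      ∑ i ∈ Finset.range (c + 1), ((M - i : ℕ) : ℚ) = (c + 1) * M - c * (c + 1) / 2 := by
    intro M c hcM
    induction c with
    | zero => simp
    | succ c ih => rw [Finset.sum_range_succ, ih (by omega), Nat.cast_sub hcM]; push_cast; ring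
  have middle : ∀ (M : ℚ) (K : ℕ), ∑ c ∈ Finset.range K, ((c + 1) * M - c * (c + 1) / 2) =
      K * (K + 1) * M / 2 - (K - 1) * K * (K + 1) / 6 := by
    intro M K
    induction K with
    | zero => simp
    | succ K ih => rw [Finset.sum_range_succ, ih]; push_cast; ring
  have outer : ∀ N : ℕ,
      ∑ M ∈ Finset.range N, (M * (M + 1) * (M : ℚ) / 2 - (M - 1) * M * (M + 1) / 6) =
        (N - 1) * N ^ 2 * (N + 1) / 12 := by
    intro N
    induction N with
    | zero => simp
    | succ N ih => rw [Finset.sum_range_succ, ih]; push_cast; ring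
  simp only [twoAscentParams, Finset.card_sigma, Nat.card_Ioc, Nat.cast_sum]
  rw [Finset.sum_congr rfl fun M _ => Finset.sum_congr rfl fun c hc =>
    inner M c (Finset.mem_range.1 hc).le]
  rw [Finset.sum_congr rfl fun (M : ℕ) _ => middle M M, outer, Nat.cast_sub hn]
  push_cast
  ring

lemma runParams_of_mem_twoAscentParams {p : Σ _ : ℕ, Σ _ : ℕ, Σ _ : ℕ, ℕ}
    (hp : p ∈ twoAscentParams n) : RunParams n p.2.2.1 p.2.2.2 p.2.1 p.1 := by
  obtain ⟨M, c, i, j⟩ := p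
  dsimp only
  rw [mem_twoAscentParams] at hp
  exact ⟨hp.1, hp.2.1, hp.2.2.1, hp.2.2.2.1, by omega, by omega⟩

lemma mem_twoAscentParams_of_ascents_eq (hσ : Avoids312 σ) {i j : ℕ} (hij : i < j)
    (hA : ascents σ = {i, j}) :
    (⟨valAt σ (i + 1), valAt σ 0, i, j⟩ : Σ _ : ℕ, Σ _ : ℕ, Σ _ : ℕ, ℕ) ∈ twoAscentParams n := by
  have hi := mem_ascents.1 (show i ∈ ascents σ by simp [hA])
  have hj := mem_ascents.1 (show j ∈ ascents σ by simp [hA])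
  have htop : valAt σ (j + 1) = n - 1 :=
    valAt_succ_eq_top hσ (by simp [hA]) (by simp [hA]; omega)
  have hrun : ∀ l r, l ≤ r → r ≤ j → (l ≤ i → r ≤ i) → valAt σ r + (r - l) ≤ valAt σ l :=
    fun l r hlr hrj hli => valAt_add_sub_le (fun t _ ht => by simp [hA]; omega) hlr (by omega)
  have hrun₀ := hrun 0 i (by omega) (by omega) (fun _ => le_rfl)
  set c := valAt σ 0
  set M := valAt σ (i + 1)
  have hcM : c < M := by
    have hne : c ≠ M := fun he => by have := valAt_inj σ (by omega) (by omega) he; omega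
    by_contra! hMc
    rcases i.eq_zero_or_pos with rfl | hi₀
    · omega
    · exact avoids312_iff.1 hσ 0 i (i + 1) hi₀ (by omega) hi.1 hi.2 (by omega)
  have hMn : M + 2 ≤ n := by
    have hne : M ≠ n - 1 := fun he => by
      have := valAt_inj σ (by omega) hj.1 (he.trans htop.symm); omega
    have := valAt_lt σ hi.1
    omega
  -- the `j + 1` values at positions `0, …, j` are distinct and at most `M`
  have hjM : j ≤ M := by
    have hle : ∀ t ≤ j, valAt σ t ≤ M := fun t ht => by
      rcases le_or_gt t i with hti | hti
      · have := hrun 0 t (by omega) ht (fun _ => hti); omega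
      · have := hrun (i + 1) t hti ht (by omega); omega
    simpa using Finset.card_le_card_of_injOn (valAt σ) (s := Finset.range (j + 1))
      (t := Finset.range (M + 1))
      (fun t ht => Finset.mem_range_succ_iff.2 (hle t (Finset.mem_range_succ_iff.1 ht)))
      (fun t ht s hs hts => valAt_inj σ (by simp at ht; omega) (by simp at hs; omega) hts)
  rw [mem_twoAscentParams]
  omega

lemma eq_and_eq_of_pair_eq {α : Type*} [LinearOrder α] {i j i' j' : α} (hij : i < j)
    (hij' : i' < j') (h : ({i, j} : Finset α) = {i', j'}) : i = i' ∧ j = j' := by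
  have := congrArg (fun s : Finset α => (s : Set α)) h
  simp only [Finset.coe_pair, Set.pair_eq_pair_iff] at this
  rcases this with h | ⟨rfl, rfl⟩
  · exact h
  · exact absurd (hij.trans hij') (lt_irrefl _)

lemma card_avoiders312WithAscents_two (hn : 1 ≤ n) :
    ((avoiders312WithAscents n 2).card : ℚ) = n * (n - 1) ^ 2 * (n - 2) / 12 := by
  rw [← card_twoAscentParams hn, eq_comm, Nat.cast_inj]
  refine Finset.card_bij (fun p hp => runPerm (runParams_of_mem_twoAscentParams hp)) ?_ ?_ ?_
  · intro ⟨M, c, i, j⟩ hp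
    have h : RunParams n i j c M := runParams_of_mem_twoAscentParams hp
    rw [mem_twoAscentParams] at hp
    show runPerm h ∈ _
    rw [mem_avoiders312WithAscents, ascents_runPerm h, if_pos (by omega)]
    exact ⟨avoids312_runPerm h, Finset.card_pair (by omega)⟩
  · intro ⟨M, c, i, j⟩ hp ⟨M', c', i', j'⟩ hp' he
    have h : RunParams n i j c M := runParams_of_mem_twoAscentParams hp
    have h' : RunParams n i' j' c' M' := runParams_of_mem_twoAscentParams hp'
    replace he : runPerm h = runPerm h' := he
    have h₀ := congrArg (valAt · 0) he
    have hA := congrArg ascents he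
    simp only [valAt_runPerm_zero] at h₀
    rw [mem_twoAscentParams] at hp hp'
    rw [ascents_runPerm, ascents_runPerm, if_pos (by omega), if_pos (by omega)] at hA
    obtain ⟨rfl, rfl⟩ := eq_and_eq_of_pair_eq (by omega) (by omega) hA
    have hM := congrArg (valAt · (i + 1)) he
    simp only [valAt_runPerm_succ] at hM
    rw [h₀, hM]
  · intro σ hσ
    obtain ⟨hσ, hA⟩ := mem_avoiders312WithAscents.1 hσ
    obtain ⟨i, j, hij, hA⟩ : ∃ i j, i < j ∧ ascents σ = {i, j} := by
      obtain ⟨x, y, hxy, hA⟩ := Finset.card_eq_two.1 hA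
      rcases lt_or_gt_of_ne hxy with h | h
      · exact ⟨x, y, h, hA⟩
      · exact ⟨y, x, h, hA.trans (Finset.pair_comm x y)⟩
    have hmem := mem_twoAscentParams_of_ascents_eq hσ hij hA
    have hjn := (mem_ascents.1 (show j ∈ ascents σ by simp [hA])).1
    have h : RunParams n i j (valAt σ 0) (valAt σ (i + 1)) :=
      runParams_of_mem_twoAscentParams hmem
    have hAr : ascents (runPerm h) = {i, j} := by rw [ascents_runPerm, if_pos hjn]
    refine ⟨_, hmem, eq_of_ascents_eq (avoids312_runPerm h) hσ (hAr.trans hA.symm)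
      (valAt_runPerm_zero h) ?_⟩
    simp only [hAr, Finset.mem_insert, Finset.mem_singleton, forall_eq_or_imp, forall_eq]
    have hmax : ∀ a ∈ ({i, j} : Finset ℕ), a ≤ j := by simp [hij.le]
    exact ⟨valAt_runPerm_succ h,
      (valAt_succ_eq_top (avoids312_runPerm h) (by simp [hAr]) (hAr ▸ hmax)).trans
        (valAt_succ_eq_top hσ (by simp [hA]) (hA ▸ hmax)).symm⟩

lemma filter_avoids312_avoids1234_eq_biUnion (hn : 1 ≤ n) :
    Finset.univ.filter (fun σ : Equiv.Perm (Fin n) => Avoids312 σ ∧ Avoids1234 σ) =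
      (Finset.range 3).biUnion (avoiders312WithAscents n) := by
  ext σ
  simp only [Finset.mem_filter, Finset.mem_univ, true_and, Finset.mem_biUnion, Finset.mem_range,
    mem_avoiders312WithAscents, avoids1234_iff_lis_le]
  constructor
  · rintro ⟨hσ, hlis⟩
    rw [lis_eq_card_ascents_add_one hn hσ] at hlis
    exact ⟨_, by omega, hσ, rfl⟩
  · rintro ⟨k, hk, hσ, rfl⟩
    rw [lis_eq_card_ascents_add_one hn hσ]
    exact ⟨hσ, by omega⟩

lemma sum_lis_avoiders312WithAscents (hn : 1 ≤ n) (k : ℕ) :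
    ∑ σ ∈ avoiders312WithAscents n k, (lis σ : ℚ) =
      (k + 1) * (avoiders312WithAscents n k).card := by
  rw [Finset.sum_congr rfl fun σ hσ => ?_, Finset.sum_const, nsmul_eq_mul, mul_comm]
  obtain ⟨hσ, hk⟩ := mem_avoiders312WithAscents.1 hσ
  rw [lis_eq_card_ascents_add_one hn hσ, hk]
  push_cast
  ring

lemma pairwiseDisjoint_avoiders312WithAscents (s : Set ℕ) :
    s.PairwiseDisjoint (avoiders312WithAscents n) :=
  fun _ _ _ _ hkl => Finset.disjoint_left.2 fun _ hk hl =>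
    hkl ((mem_avoiders312WithAscents.1 hk).2.symm.trans (mem_avoiders312WithAscents.1 hl).2)

end Pattern312

/-- the sum of `L(σ)` over `S_n(312,1234)` equals `(n⁴-4n³+9n²-6n+4)/4`;
equivalently the expectation is `3(n⁴-4n³+9n²-6n+4)/(n⁴-4n³+11n²-8n+12)`. -/
theorem stmt_15 (n : ℕ) (hn : 1 ≤ n) :
    ∑ σ ∈ Finset.univ.filter (fun σ : Equiv.Perm (Fin n) => Avoids312 σ ∧ Avoids1234 σ),
        (lis σ : ℚ)
      = ((n : ℚ) ^ 4 - 4 * n ^ 3 + 9 * n ^ 2 - 6 * n + 4) / 4 := by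
  rw [Pattern312.filter_avoids312_avoids1234_eq_biUnion hn,
    Finset.sum_biUnion (Pattern312.pairwiseDisjoint_avoiders312WithAscents _)]
  simp only [Finset.sum_range_succ, Finset.sum_range_zero,
    Pattern312.sum_lis_avoiders312WithAscents hn]
  rw [Pattern312.avoiders312WithAscents_zero hn, Pattern312.card_avoiders312WithAscents_one,
    Pattern312.card_avoiders312WithAscents_two hn, Finset.card_singleton, Nat.cast_choose_two]
  push_cast
  ring
end

section
/- For every n ≥ 1, the number of permutations of {1,...,n} avoiding both 312 and 1243 equals (n-1)·2^{n-2} + 1. -/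
/-!
A 312-avoiding permutation `σ` of `{0, …, n}` splits at its minimum: every entry left of `0` is
smaller than every entry right of it (otherwise the two form a 312 with `0`), so
`σ = (α ⊖ 1) ⊕ β` for 312-avoiding `α`, `β` of lengths `a + b = n`. Such a `σ` avoids 1243 iff
`α` avoids 1243, `β` avoids 132, and `α` is decreasing or `β` is increasing; it avoids 132 iff `α`
does and `β` is increasing. Writing `s n` and `t n` for the numbers of permutations avoiding
`{312, 1243}` and `{312, 132}`, this gives `t (n + 1) = ∑_{a ≤ n} t a = 2 ^ n` and
`s (n + 1) = t (n + 1) + ∑_{a ≤ n} (s a - 1)`, hence `s (n + 2) = 2 s (n + 1) + 2 ^ n - 1`,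
which is solved by `s n = (n - 1) 2 ^ (n - 2) + 1`.
-/

open Equiv Finset Function

theorem Function.Injective.exists_lt_of_not_strictAnti {α β : Type*} [Preorder α] [LinearOrder β]
    {f : α → β} (hf : Injective f) (h : ¬ StrictAnti f) : ∃ i j, i < j ∧ f i < f j := by
  simp only [StrictAnti, not_forall, not_lt] at h
  obtain ⟨i, j, hij, hle⟩ := h
  exact ⟨i, j, hij, hle.lt_of_ne (hf.ne hij.ne)⟩

theorem Function.Injective.exists_lt_of_not_strictMono {α β : Type*} [Preorder α] [LinearOrder β]
    {f : α → β} (hf : Injective f) (h : ¬ StrictMono f) : ∃ i j, i < j ∧ f j < f i := by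
  simp only [StrictMono, not_forall, not_lt] at h
  obtain ⟨i, j, hij, hle⟩ := h
  exact ⟨i, j, hij, hle.lt_of_ne (hf.ne hij.ne')⟩

theorem Equiv.Perm.strictMono_iff_eq_one {α : Type*} [LinearOrder α] [WellFoundedLT α]
    (σ : Perm α) : StrictMono σ ↔ σ = 1 := by
  refine ⟨fun hσ => Equiv.ext (congrFun ((hσ.range_inj strictMono_id).1 ?_)), ?_⟩
  · simp [σ.range_eq_univ]
  · rintro rfl
    exact strictMono_id

theorem Equiv.Perm.strictAnti_iff_eq_revPerm {n : ℕ} (σ : Perm (Fin n)) :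
    StrictAnti σ ↔ σ = Fin.revPerm := by
  refine ⟨fun hσ => ?_, ?_⟩
  · have hmono : StrictMono (Fin.revPerm.trans σ) :=
      show StrictMono (σ ∘ Fin.rev) from hσ.comp Fin.rev_strictAnti
    refine Equiv.ext fun x => ?_
    simpa using congrArg (fun π : Perm (Fin n) => π x.rev) ((strictMono_iff_eq_one _).1 hmono)
  · rintro rfl
    exact Fin.rev_strictAnti

section Avoidance

variable {m n : ℕ} {σ : Perm (Fin n)} {τ : Perm (Fin m)} {f : Fin m → Fin n}

theorem Avoids312.restrict (hσ : Avoids312 σ) (hf : StrictMono f)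
    (hτ : ∀ i j, τ i < τ j → σ (f i) < σ (f j)) : Avoids312 τ :=
  fun ⟨i, j, k, hij, hjk, h₁, h₂⟩ => hσ ⟨f i, f j, f k, hf hij, hf hjk, hτ _ _ h₁, hτ _ _ h₂⟩

theorem Avoids132.restrict (hσ : Avoids132 σ) (hf : StrictMono f)
    (hτ : ∀ i j, τ i < τ j → σ (f i) < σ (f j)) : Avoids132 τ :=
  fun ⟨i, j, k, hij, hjk, h₁, h₂⟩ => hσ ⟨f i, f j, f k, hf hij, hf hjk, hτ _ _ h₁, hτ _ _ h₂⟩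

theorem Avoids1243.restrict (hσ : Avoids1243 σ) (hf : StrictMono f)
    (hτ : ∀ i j, τ i < τ j → σ (f i) < σ (f j)) : Avoids1243 τ :=
  fun ⟨i, j, k, l, hij, hjk, hkl, h₁, h₂, h₃⟩ =>
    hσ ⟨f i, f j, f k, f l, hf hij, hf hjk, hf hkl, hτ _ _ h₁, hτ _ _ h₂, hτ _ _ h₃⟩

theorem StrictMono.avoids312 (hσ : StrictMono σ) : Avoids312 σ :=
  fun ⟨_, _, _, hij, hjk, _, h⟩ => (hσ (hij.trans hjk)).not_gt h

theorem StrictMono.avoids132 (hσ : StrictMono σ) : Avoids132 σ :=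
  fun ⟨_, _, _, _, hjk, _, h⟩ => (hσ hjk).not_gt h

theorem StrictAnti.avoids312 (hσ : StrictAnti σ) : Avoids312 σ :=
  fun ⟨_, _, _, _, hjk, h, _⟩ => (hσ hjk).not_gt h

theorem StrictAnti.avoids1243 (hσ : StrictAnti σ) : Avoids1243 σ :=
  fun ⟨_, _, _, _, hij, _, _, h, _, _⟩ => (hσ hij).not_gt h

end Avoidance

section BlockSum

variable {a b n : ℕ}

def leftPos (h : a + b = n) (i : Fin a) : Fin (n + 1) := ⟨i, by omega⟩

def midPos (h : a + b = n) : Fin (n + 1) := ⟨a, by omega⟩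

def rightPos (h : a + b = n) (j : Fin b) : Fin (n + 1) := ⟨a + 1 + j, by omega⟩

def blockFun (h : a + b = n) (α : Perm (Fin a)) (β : Perm (Fin b)) (x : Fin (n + 1)) :
    Fin (n + 1) :=
  if hx : x.val < a then ⟨α ⟨x, hx⟩ + 1, by omega⟩
  else if hx' : x.val = a then 0
  else ⟨β ⟨x - (a + 1), by omega⟩ + (a + 1), by omega⟩

variable (h : a + b = n) (α : Perm (Fin a)) (β : Perm (Fin b))

@[simp] theorem leftPos_val (i : Fin a) : (leftPos h i).val = i := rfl

@[simp] theorem midPos_val : (midPos h).val = a := rfl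

@[simp] theorem rightPos_val (j : Fin b) : (rightPos h j).val = a + 1 + j := rfl

theorem eq_leftPos_or_midPos_or_rightPos (x : Fin (n + 1)) :
    (∃ i, leftPos h i = x) ∨ x = midPos h ∨ ∃ j, rightPos h j = x := by
  rcases lt_trichotomy x.val a with hx | hx | hx
  · exact Or.inl ⟨⟨x, hx⟩, rfl⟩
  · exact Or.inr (Or.inl (Fin.ext hx))
  · exact Or.inr (Or.inr ⟨⟨x - (a + 1), by omega⟩, Fin.ext (by simp only [rightPos_val]; omega)⟩)

theorem leftPos_strictMono : StrictMono (leftPos h) := fun _ _ hij => hij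

theorem rightPos_strictMono : StrictMono (rightPos h) := fun _ _ hij =>
  Nat.add_lt_add_left hij _

theorem blockFun_injective : Injective (blockFun h α β) := by
  intro x y hxy
  simp only [blockFun, Fin.ext_iff] at hxy
  split_ifs at hxy <;>
    simp only [Fin.val_zero, add_left_inj, Fin.val_inj, EmbeddingLike.apply_eq_iff_eq,
      Fin.mk.injEq] at hxy <;>
    omega

/-- The permutation `(α ⊖ 1) ⊕ β`. -/
noncomputable def blockSum : Perm (Fin (n + 1)) :=
  Equiv.ofBijective _ (Finite.injective_iff_bijective.mp (blockFun_injective h α β))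

@[simp] theorem blockSum_leftPos (i : Fin a) : (blockSum h α β (leftPos h i)).val = α i + 1 := by
  simp [blockSum, blockFun, leftPos]

@[simp] theorem blockSum_midPos : blockSum h α β (midPos h) = 0 := by
  simp [blockSum, blockFun, midPos]

@[simp] theorem blockSum_rightPos (j : Fin b) :
    (blockSum h α β (rightPos h j)).val = β j + (a + 1) := by
  have hj : ¬ a + 1 + j.val < a := by omega
  have hj' : a + 1 + j.val ≠ a := by omega
  simp [blockSum, blockFun, rightPos, hj, hj']

theorem blockSum_symm_zero : (blockSum h α β).symm 0 = midPos h := by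
  rw [Equiv.symm_apply_eq, blockSum_midPos]

theorem blockSum_leftPos_lt_iff (i j : Fin a) :
    blockSum h α β (leftPos h i) < blockSum h α β (leftPos h j) ↔ α i < α j := by
  simp only [Fin.lt_def, blockSum_leftPos, add_lt_add_iff_right]

theorem blockSum_rightPos_lt_iff (i j : Fin b) :
    blockSum h α β (rightPos h i) < blockSum h α β (rightPos h j) ↔ β i < β j := by
  simp only [Fin.lt_def, blockSum_rightPos, add_lt_add_iff_right]

theorem blockSum_inj {α' : Perm (Fin a)} {β' : Perm (Fin b)}
    (hE : blockSum h α β = blockSum h α' β') : α = α' ∧ β = β' := by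
  constructor <;> ext i
  · simpa using congrArg (fun σ : Perm (Fin (n + 1)) => (σ (leftPos h i)).val) hE
  · simpa using congrArg (fun σ : Perm (Fin (n + 1)) => (σ (rightPos h i)).val) hE

end BlockSum

section Patterns

variable {a b n : ℕ} (h : a + b = n) {α : Perm (Fin a)} {β : Perm (Fin b)}

theorem avoids312_blockSum_iff : Avoids312 (blockSum h α β) ↔ Avoids312 α ∧ Avoids312 β := by
  refine ⟨fun hE => ⟨hE.restrict (leftPos_strictMono h) fun i j => (blockSum_leftPos_lt_iff ..).2,
    hE.restrict (rightPos_strictMono h) fun i j => (blockSum_rightPos_lt_iff ..).2⟩, ?_⟩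
  rintro ⟨hα, hβ⟩ ⟨x, y, z, hxy, hyz, h₁, h₂⟩
  -- positions and values both increase from block to block, so a 312 lies inside `α` or `β`
  rcases eq_leftPos_or_midPos_or_rightPos h x with ⟨i, rfl⟩ | rfl | ⟨i, rfl⟩ <;>
  rcases eq_leftPos_or_midPos_or_rightPos h y with ⟨j, rfl⟩ | rfl | ⟨j, rfl⟩ <;>
  rcases eq_leftPos_or_midPos_or_rightPos h z with ⟨k, rfl⟩ | rfl | ⟨k, rfl⟩ <;>
  simp only [Fin.lt_def, leftPos_val, midPos_val, rightPos_val, blockSum_leftPos, blockSum_midPos,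
    blockSum_rightPos, Fin.val_zero] at hxy hyz h₁ h₂ <;>
  first
  | omega
  | exact hα ⟨i, j, k, by omega, by omega, by omega, by omega⟩
  | exact hβ ⟨i, j, k, by omega, by omega, by omega, by omega⟩

theorem avoids132_blockSum_iff : Avoids132 (blockSum h α β) ↔ Avoids132 α ∧ StrictMono β := by
  constructor
  · refine fun hE => ⟨hE.restrict (leftPos_strictMono h) fun i j => (blockSum_leftPos_lt_iff ..).2,
      by_contra fun hβ => ?_⟩
    obtain ⟨i, j, hij, hji⟩ := β.injective.exists_lt_of_not_strictMono hβ
    refine hE ⟨midPos h, rightPos h i, rightPos h j, ?_, ?_, ?_, ?_⟩ <;>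
      simp only [Fin.lt_def, midPos_val, rightPos_val, blockSum_midPos, blockSum_rightPos,
        Fin.val_zero] <;> omega
  rintro ⟨hα, hβ⟩ ⟨x, y, z, hxy, hyz, h₁, h₂⟩
  -- a 132 lies inside `α`, or its last two entries are a descent of `β`
  rcases eq_leftPos_or_midPos_or_rightPos h x with ⟨i, rfl⟩ | rfl | ⟨i, rfl⟩ <;>
  rcases eq_leftPos_or_midPos_or_rightPos h y with ⟨j, rfl⟩ | rfl | ⟨j, rfl⟩ <;>
  rcases eq_leftPos_or_midPos_or_rightPos h z with ⟨k, rfl⟩ | rfl | ⟨k, rfl⟩ <;>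
  simp only [Fin.lt_def, leftPos_val, midPos_val, rightPos_val, blockSum_leftPos, blockSum_midPos,
    blockSum_rightPos, Fin.val_zero] at hxy hyz h₁ h₂ <;>
  first
  | omega
  | exact hα ⟨i, j, k, by omega, by omega, by omega, by omega⟩
  | exact absurd (hβ (show j < k by omega)) (by omega)

theorem avoids1243_blockSum_iff : Avoids1243 (blockSum h α β) ↔
    Avoids1243 α ∧ Avoids132 β ∧ (StrictAnti α ∨ StrictMono β) := by
  constructor
  · intro hE
    refine ⟨hE.restrict (leftPos_strictMono h) fun i j => (blockSum_leftPos_lt_iff ..).2, ?_, ?_⟩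
    · rintro ⟨i, j, k, hij, hjk, h₁, h₂⟩
      refine hE ⟨midPos h, rightPos h i, rightPos h j, rightPos h k, ?_, ?_, ?_, ?_, ?_, ?_⟩ <;>
        simp only [Fin.lt_def, midPos_val, rightPos_val, blockSum_midPos, blockSum_rightPos,
          Fin.val_zero] <;> omega
    · by_contra! hd
      obtain ⟨i, j, hij, hasc⟩ := α.injective.exists_lt_of_not_strictAnti hd.1
      obtain ⟨k, l, hkl, hdesc⟩ := β.injective.exists_lt_of_not_strictMono hd.2
      refine hE ⟨leftPos h i, leftPos h j, rightPos h k, rightPos h l, ?_, ?_, ?_, ?_, ?_, ?_⟩ <;>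
        simp only [Fin.lt_def, leftPos_val, rightPos_val, blockSum_leftPos, blockSum_rightPos] <;>
        omega
  rintro ⟨hα, hβ, hd⟩ ⟨x, y, z, w, hxy, hyz, hzw, h₁, h₂, h₃⟩
  have hmono : ∀ i j k l, i < j → k < l → α i < α j → β k < β l := fun i j k l hij hkl hα =>
    hd.elim (fun hd => absurd (hd hij) hα.asymm) (fun hd => hd hkl)
  -- a 1243 lies inside `α`, ends with a 132 of `β`, or is an ascent of `α` then a descent of `β`
  rcases eq_leftPos_or_midPos_or_rightPos h x with ⟨i, rfl⟩ | rfl | ⟨i, rfl⟩ <;>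
  rcases eq_leftPos_or_midPos_or_rightPos h y with ⟨j, rfl⟩ | rfl | ⟨j, rfl⟩ <;>
  rcases eq_leftPos_or_midPos_or_rightPos h z with ⟨k, rfl⟩ | rfl | ⟨k, rfl⟩ <;>
  rcases eq_leftPos_or_midPos_or_rightPos h w with ⟨l, rfl⟩ | rfl | ⟨l, rfl⟩ <;>
  simp only [Fin.lt_def, leftPos_val, midPos_val, rightPos_val, blockSum_leftPos, blockSum_midPos,
    blockSum_rightPos, Fin.val_zero] at hxy hyz hzw h₁ h₂ h₃ <;>
  first
  | omega
  | exact hα ⟨i, j, k, l, by omega, by omega, by omega, by omega, by omega, by omega⟩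
  | exact hβ ⟨j, k, l, by omega, by omega, by omega, by omega⟩
  | exact absurd (hmono i j k l (by omega) (by omega) (by omega)) (by omega)

end Patterns

theorem Fin.apply_le_of_forall_lt {m : ℕ} {f : Fin m → Fin m} (hf : Injective f) {p x : Fin m}
    (hsep : ∀ x y, x ≤ p → p < y → f x < f y) (hx : x ≤ p) : f x ≤ p := by
  have hsub : (Ioi p).image f ⊆ Ioi (f x) := by
    simp only [image_subset_iff, mem_Ioi]
    exact fun y hy => hsep x y hx hy
  have := card_le_card hsub
  rw [card_image_of_injective _ hf, Fin.card_Ioi, Fin.card_Ioi] at this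
  rw [Fin.le_def]
  omega

theorem Fin.lt_apply_of_forall_lt {m : ℕ} {f : Fin m → Fin m} (hf : Injective f) {p y : Fin m}
    (hsep : ∀ x y, x ≤ p → p < y → f x < f y) (hy : p < y) : p < f y := by
  have hsub : (Iic p).image f ⊆ Iio (f y) := by
    simp only [image_subset_iff, mem_Iic, mem_Iio]
    exact fun x hx => hsep x y hx hy
  have := card_le_card hsub
  rw [card_image_of_injective _ hf, Fin.card_Iic, Fin.card_Iio] at this
  rw [Fin.lt_def]
  omega

theorem exists_perm_val_eq_add {m k : ℕ} (f : Fin m → Fin k) (hf : Injective f) (c : ℕ)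
    (hle : ∀ i, c ≤ f i) (hlt : ∀ i, (f i : ℕ) < m + c) :
    ∃ π : Perm (Fin m), ∀ i, (f i : ℕ) = π i + c := by
  let g : Fin m → Fin m := fun i => ⟨f i - c, by have := hle i; have := hlt i; omega⟩
  have hg : Injective g := fun i j hij => by
    have hij' : (f i : ℕ) - c = f j - c := congrArg Fin.val hij
    have := hle i
    have := hle j
    exact hf (Fin.ext (by omega))
  refine ⟨Equiv.ofBijective g (Finite.injective_iff_bijective.mp hg), fun i => ?_⟩
  have := hle i
  simp only [Equiv.ofBijective_apply, g]
  omega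

theorem exists_blockSum_eq {n : ℕ} (σ : Perm (Fin (n + 1))) (hσ : Avoids312 σ) :
    ∃ (a : Fin (n + 1)) (α : Perm (Fin a)) (β : Perm (Fin (n - a))),
      blockSum (Nat.add_sub_of_le a.is_le) α β = σ := by
  obtain ⟨p, hσp⟩ := σ.surjective 0
  have h := Nat.add_sub_of_le p.is_le
  have hmin : ∀ y, y ≠ p → σ p < σ y := fun y hy =>
    hσp ▸ Fin.pos_iff_ne_zero.2 fun h0 => hy (σ.injective (h0.trans hσp.symm))
  have hsep : ∀ x y, x ≤ p → p < y → σ x < σ y := by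
    intro x y hx hy
    rcases hx.lt_or_eq with hx | rfl
    · by_contra! hyx
      exact hσ ⟨x, p, y, hx, hy, hmin y hy.ne', hyx.lt_of_ne (σ.injective.ne (hx.trans hy).ne')⟩
    · exact hmin y hy.ne'
  have hleft_pos (i : Fin p) : 1 ≤ (σ (leftPos h i)).val := by
    have := hmin (leftPos h i) (Fin.ne_of_lt i.isLt)
    rwa [hσp, Fin.lt_def] at this
  have hleft_le (i : Fin p) : (σ (leftPos h i)).val < p + 1 :=
    Nat.lt_succ_of_le (Fin.apply_le_of_forall_lt σ.injective hsep (Fin.le_def.2 i.isLt.le))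
  have hright (j : Fin (n - p)) : p + 1 ≤ (σ (rightPos h j)).val :=
    Fin.lt_apply_of_forall_lt σ.injective hsep (Fin.lt_def.2 (by rw [rightPos_val]; omega))
  obtain ⟨α, hα⟩ := exists_perm_val_eq_add (σ ∘ leftPos h)
    (σ.injective.comp (leftPos_strictMono h).injective) 1 hleft_pos (by simpa using hleft_le)
  obtain ⟨β, hβ⟩ := exists_perm_val_eq_add (σ ∘ rightPos h)
    (σ.injective.comp (rightPos_strictMono h).injective) (p + 1) hright (fun j => by omega)
  refine ⟨p, α, β, Equiv.ext fun x => ?_⟩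
  rcases eq_leftPos_or_midPos_or_rightPos h x with ⟨i, rfl⟩ | rfl | ⟨j, rfl⟩
  · exact Fin.ext ((blockSum_leftPos ..).trans (hα i).symm)
  · exact (blockSum_midPos ..).trans hσp.symm
  · exact Fin.ext ((blockSum_rightPos ..).trans (hβ j).symm)

theorem card_filter_eq_sum_blockSum {n : ℕ} (P : Perm (Fin (n + 1)) → Prop) [DecidablePred P]
    (hP : ∀ σ, P σ → Avoids312 σ) :
    #{σ | P σ} = ∑ a : Fin (n + 1), #{x : Perm (Fin a) × Perm (Fin (n - a)) |
      P (blockSum (Nat.add_sub_of_le a.is_le) x.1 x.2)} := by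
  rw [← card_sigma]
  symm
  refine card_bij (fun x _ => blockSum (Nat.add_sub_of_le x.1.is_le) x.2.1 x.2.2) ?_ ?_ ?_
  · rintro ⟨a, α, β⟩ hx
    simpa using hx
  · rintro ⟨a, α, β⟩ - ⟨a', α', β'⟩ - hE
    obtain rfl : a = a' := Fin.ext <| by
      simpa [blockSum_symm_zero] using congrArg (fun σ : Perm (Fin (n + 1)) => (σ.symm 0).val) hE
    obtain ⟨rfl, rfl⟩ := blockSum_inj _ _ _ hE
    rfl
  · intro σ hσ
    obtain ⟨a, α, β, rfl⟩ := exists_blockSum_eq σ (hP σ (mem_filter.1 hσ).2)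
    exact ⟨⟨a, α, β⟩, by simpa using hσ, rfl⟩

def avoiders312And1243 (n : ℕ) : Finset (Perm (Fin n)) := {σ | Avoids312 σ ∧ Avoids1243 σ}

def avoiders312And132 (n : ℕ) : Finset (Perm (Fin n)) := {σ | Avoids312 σ ∧ Avoids132 σ}

theorem revPerm_mem_avoiders312And1243 (n : ℕ) : Fin.revPerm ∈ avoiders312And1243 n :=
  mem_filter.2 ⟨mem_univ _, Fin.rev_strictAnti.avoids312, Fin.rev_strictAnti.avoids1243⟩

theorem one_mem_avoiders312And132 (n : ℕ) : (1 : Perm (Fin n)) ∈ avoiders312And132 n :=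
  mem_filter.2 ⟨mem_univ _, strictMono_id.avoids312, strictMono_id.avoids132⟩

theorem card_avoiders312And1243_zero : #(avoiders312And1243 0) = 1 :=
  card_eq_one.2 ⟨_, eq_singleton_iff_unique_mem.2
    ⟨revPerm_mem_avoiders312And1243 0, fun _ _ => Subsingleton.elim _ _⟩⟩

theorem card_avoiders312And132_zero : #(avoiders312And132 0) = 1 :=
  card_eq_one.2 ⟨_, eq_singleton_iff_unique_mem.2
    ⟨one_mem_avoiders312And132 0, fun _ _ => Subsingleton.elim _ _⟩⟩

theorem card_filter_blockSum_avoids312_avoids132 {a b n : ℕ} (h : a + b = n) :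
    #{x : Perm (Fin a) × Perm (Fin b) |
      Avoids312 (blockSum h x.1 x.2) ∧ Avoids132 (blockSum h x.1 x.2)} =
      #(avoiders312And132 a) := by
  have hsplit : ({x : Perm (Fin a) × Perm (Fin b) |
      Avoids312 (blockSum h x.1 x.2) ∧ Avoids132 (blockSum h x.1 x.2)} : Finset _) =
      avoiders312And132 a ×ˢ {1} := by
    ext ⟨α, β⟩
    simp only [mem_filter, mem_univ, true_and, mem_product, mem_singleton, avoiders312And132,
      avoids312_blockSum_iff, avoids132_blockSum_iff, ← Perm.strictMono_iff_eq_one]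
    exact ⟨fun ⟨⟨h₁, _⟩, h₂, hβ⟩ => ⟨⟨h₁, h₂⟩, hβ⟩,
      fun ⟨⟨h₁, h₂⟩, hβ⟩ => ⟨⟨h₁, hβ.avoids312⟩, h₂, hβ⟩⟩
  rw [hsplit, card_product, card_singleton, mul_one]

theorem card_avoiders312And132_succ (n : ℕ) :
    #(avoiders312And132 (n + 1)) = ∑ a ∈ range (n + 1), #(avoiders312And132 a) := by
  rw [avoiders312And132, card_filter_eq_sum_blockSum _ fun σ hσ => hσ.1,
    ← Fin.sum_univ_eq_sum_range]
  exact sum_congr rfl fun a _ => card_filter_blockSum_avoids312_avoids132 _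

theorem card_filter_blockSum_avoids312_avoids1243 {a b n : ℕ} (h : a + b = n) :
    #{x : Perm (Fin a) × Perm (Fin b) |
      Avoids312 (blockSum h x.1 x.2) ∧ Avoids1243 (blockSum h x.1 x.2)} + 1 =
      #(avoiders312And132 b) + #(avoiders312And1243 a) := by
  have hsplit : ({x : Perm (Fin a) × Perm (Fin b) |
      Avoids312 (blockSum h x.1 x.2) ∧ Avoids1243 (blockSum h x.1 x.2)} : Finset _) =
      {Fin.revPerm} ×ˢ avoiders312And132 b ∪ avoiders312And1243 a ×ˢ {1} := by
    ext ⟨α, β⟩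
    simp only [mem_filter, mem_univ, true_and, mem_union, mem_product, mem_singleton,
      avoiders312And132, avoiders312And1243, avoids312_blockSum_iff, avoids1243_blockSum_iff]
    constructor
    · rintro ⟨⟨h₁, h₂⟩, h₃, h₄, hα | hβ⟩
      · exact Or.inl ⟨(Perm.strictAnti_iff_eq_revPerm α).1 hα, h₂, h₄⟩
      · exact Or.inr ⟨⟨h₁, h₃⟩, (Perm.strictMono_iff_eq_one β).1 hβ⟩
    · rintro (⟨rfl, h₂, h₄⟩ | ⟨⟨h₁, h₃⟩, rfl⟩)
      · exact ⟨⟨Fin.rev_strictAnti.avoids312, h₂⟩, Fin.rev_strictAnti.avoids1243, h₄,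
          Or.inl Fin.rev_strictAnti⟩
      · exact ⟨⟨h₁, strictMono_id.avoids312⟩, h₃, strictMono_id.avoids132, Or.inr strictMono_id⟩
  have hinter : {Fin.revPerm} ×ˢ avoiders312And132 b ∩ avoiders312And1243 a ×ˢ {1} =
      {(Fin.revPerm, 1)} := by
    rw [product_inter_product, singleton_inter_of_mem (revPerm_mem_avoiders312And1243 a),
      inter_singleton_of_mem (one_mem_avoiders312And132 b), singleton_product_singleton]
  rw [hsplit, ← card_singleton (Fin.revPerm, (1 : Perm (Fin b))), ← hinter,
    card_union_add_card_inter]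
  simp

theorem card_avoiders312And1243_succ (n : ℕ) :
    #(avoiders312And1243 (n + 1)) + (n + 1) =
      #(avoiders312And132 (n + 1)) + ∑ a ∈ range (n + 1), #(avoiders312And1243 a) := by
  have hreflect : ∑ a ∈ range (n + 1), #(avoiders312And132 (n - a)) =
      #(avoiders312And132 (n + 1)) := by
    rw [card_avoiders312And132_succ]
    simpa using sum_range_reflect (fun a => #(avoiders312And132 a)) (n + 1)
  calc #(avoiders312And1243 (n + 1)) + (n + 1)
      = ∑ a : Fin (n + 1), (#{x : Perm (Fin a) × Perm (Fin (n - a)) |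
          Avoids312 (blockSum (Nat.add_sub_of_le a.is_le) x.1 x.2) ∧
            Avoids1243 (blockSum (Nat.add_sub_of_le a.is_le) x.1 x.2)} + 1) := by
        rw [avoiders312And1243, card_filter_eq_sum_blockSum _ fun σ hσ => hσ.1, sum_add_distrib]
        simp
    _ = ∑ a : Fin (n + 1), (#(avoiders312And132 (n - a)) + #(avoiders312And1243 a)) :=
        sum_congr rfl fun a _ => card_filter_blockSum_avoids312_avoids1243 _
    _ = #(avoiders312And132 (n + 1)) + ∑ a ∈ range (n + 1), #(avoiders312And1243 a) := by
        rw [sum_add_distrib, Fin.sum_univ_eq_sum_range (fun a => #(avoiders312And132 (n - a))),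
          Fin.sum_univ_eq_sum_range (fun a => #(avoiders312And1243 a)), hreflect]

theorem card_avoiders312And132_succ_eq_pow (n : ℕ) : #(avoiders312And132 (n + 1)) = 2 ^ n := by
  induction n with
  | zero => simp [card_avoiders312And132_succ, card_avoiders312And132_zero]
  | succ n ih =>
    rw [card_avoiders312And132_succ, sum_range_succ, ← card_avoiders312And132_succ, ih, pow_succ,
      mul_two]

theorem card_avoiders312And1243_one : #(avoiders312And1243 1) = 1 := by
  simpa [card_avoiders312And132_succ_eq_pow, card_avoiders312And1243_zero] using
    card_avoiders312And1243_succ 0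

theorem card_avoiders312And1243_add_two (n : ℕ) :
    #(avoiders312And1243 (n + 2)) = (n + 1) * 2 ^ n + 1 := by
  induction n with
  | zero =>
    simpa [sum_range_succ, card_avoiders312And132_succ_eq_pow, card_avoiders312And1243_zero,
      card_avoiders312And1243_one] using card_avoiders312And1243_succ 1
  | succ n ih =>
    have h₁ := card_avoiders312And1243_succ (n + 1)
    have h₂ := card_avoiders312And1243_succ (n + 2)
    rw [sum_range_succ] at h₂
    rw [card_avoiders312And132_succ_eq_pow] at h₁ h₂
    zify at h₁ h₂ ih ⊢
    linear_combination h₂ - h₁ + 2 * ih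

theorem stmt_16_general (n : ℕ) :
    (Finset.univ.filter
        (fun σ : Equiv.Perm (Fin n) => Avoids312 σ ∧ Avoids1243 σ)).card
      = (n - 1) * 2 ^ (n - 2) + 1 := by
  match n with
  | 0 => exact card_avoiders312And1243_zero
  | 1 => exact card_avoiders312And1243_one
  | n + 2 => exact card_avoiders312And1243_add_two n

/-- `|S_n(312,1243)| = (n-1)·2^(n-2) + 1` for `n ≥ 1`. -/
theorem stmt_16 (n : ℕ) (hn : 1 ≤ n) :
    (Finset.univ.filter
        (fun σ : Equiv.Perm (Fin n) => Avoids312 σ ∧ Avoids1243 σ)).card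
      = (n - 1) * 2 ^ (n - 2) + 1 :=
  stmt_16_general n
end
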